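/- arXiv:1408.4445 — 8 statements merged into one kernel-verified Lean document; each statement's English description precedes it below -/
import Mathlib

section
/- Let Ξ ⊆ ℝ be a closed interval with sup Ξ = +∞, let ξ_(1) < ξ_(2) < ⋯ < ξ_(N) be points of Ξ, let c : Ξ → ℝ be continuous with c(ξ) → ∞ as ξ → +∞ along Ξ, and let Q > 1/(2N). Define 𝓕 = { F₀ Borel probability measure on Ξ : max_{1≤i≤N} max( i/N − F₀((−∞, ξ_(i)]), F₀((−∞, ξ_(i)]) − (i−1)/N ) ≤ Q } (the Kolmogorov–Smirnov confidence region). Then sup_{F₀ ∈ 𝓕} E_{F₀}[c(ξ)] = +∞ (the supremum of integrals, allowing the value +∞, is infinite). -/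
open MeasureTheory Filter Topology
open scoped ENNReal

private lemma integrable_dirac' (f : ℝ → ℝ) (a : ℝ) : Integrable f (Measure.dirac a) := by
  have h : (fun _ => f a) =ᵐ[Measure.dirac a] f := by
    rw [Filter.EventuallyEq, ae_dirac_eq]
    exact Filter.eventually_pure.2 rfl
  exact (integrable_const (f a)).congr h

set_option maxHeartbeats 1000000 in
/-- the worst-case expected cost over the Kolmogorov–Smirnov confidence
region is infinite when the support is unbounded above and the cost is unbounded.
Let `Ξ ⊆ ℝ` be a closed interval with `sup Ξ = +∞`, let `ξs 0 < ⋯ < ξs (N-1)` be points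
of `Ξ`, let `c` be continuous on `Ξ` with `c(ξ) → ∞` as `ξ → +∞` along `Ξ`, and let
`Q > 1/(2N)`.  Then the supremum over the Kolmogorov–Smirnov confidence region
`𝓕 = {F₀ : D_N(F₀) ≤ Q}` of the expected costs is `+∞`. -/
theorem stmt2
    (Ξ : Set ℝ) (hΞclosed : IsClosed Ξ) (hΞconn : Ξ.OrdConnected) (hΞunb : ¬ BddAbove Ξ)
    (N : ℕ) (hN : 0 < N) (ξs : Fin N → ℝ) (hmem : ∀ i, ξs i ∈ Ξ) (hmono : StrictMono ξs)
    (c : ℝ → ℝ) (hc : ContinuousOn c Ξ)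
    (hcoerc : Tendsto c (atTop ⊓ 𝓟 Ξ) atTop)
    (Q : ℝ) (hQ : 1 / (2 * (N : ℝ)) < Q) :
    (⨆ F₀ ∈ {F₀ : Measure ℝ | IsProbabilityMeasure F₀ ∧ F₀ Ξᶜ = 0 ∧
        ∀ i : Fin N, ((i : ℕ) + 1 : ℝ) / N - (F₀ (Set.Iic (ξs i))).toReal ≤ Q ∧
          (F₀ (Set.Iic (ξs i))).toReal - ((i : ℕ) : ℝ) / N ≤ Q},
      ((∫ ξ, c ξ ∂F₀ : ℝ) : EReal)) = ⊤ := by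
  classical
  have hNR : (0:ℝ) < N := by exact_mod_cast hN
  -- the key claim
  have key : ∀ b : ℝ, ∃ F₀ : Measure ℝ, (IsProbabilityMeasure F₀ ∧ F₀ Ξᶜ = 0 ∧
      ∀ i : Fin N, ((i : ℕ) + 1 : ℝ) / N - (F₀ (Set.Iic (ξs i))).toReal ≤ Q ∧
        (F₀ (Set.Iic (ξs i))).toReal - ((i : ℕ) : ℝ) / N ≤ Q) ∧ b < ∫ ξ, c ξ ∂F₀ := by
    intro b
    set L : Fin N := ⟨N-1, by omega⟩ with hLdef
    have hne : (Finset.univ : Finset (Fin N)).Nonempty := ⟨L, Finset.mem_univ L⟩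
    set B := Finset.univ.inf' hne (fun i => c (ξs i)) with hBdef
    have hBle : ∀ i, B ≤ c (ξs i) := fun i => Finset.inf'_le _ (Finset.mem_univ i)
    set K := (2*(N:ℝ))*(b+1) - (2*(N:ℝ)-1)*B with hKdef
    -- find the far-out point x
    have hnebot : (atTop ⊓ 𝓟 Ξ).NeBot := by
      rw [inf_principal_neBot_iff]
      intro U hU
      obtain ⟨a, ha⟩ := mem_atTop_sets.1 hU
      obtain ⟨y, hyΞ, hay⟩ := not_bddAbove_iff.1 hΞunb a
      exact ⟨y, ha y hay.le, hyΞ⟩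
    have h1 : ∀ᶠ x in atTop ⊓ 𝓟 Ξ, K ≤ c x := hcoerc.eventually (eventually_ge_atTop K)
    have h2 : ∀ᶠ x in atTop ⊓ 𝓟 Ξ, ξs L < x :=
      (eventually_gt_atTop (ξs L)).filter_mono inf_le_left
    have h3 : ∀ᶠ x in atTop ⊓ 𝓟 Ξ, x ∈ Ξ :=
      eventually_inf_principal.2 (Eventually.of_forall fun x hx => hx)
    obtain ⟨x, hxK, hxgt, hxΞ⟩ := (h1.and (h2.and h3)).exists
    have hxgt' : ∀ i, ξs i < x := by
      intro i
      have hiL : i ≤ L := by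
        rw [Fin.le_def]
        have := i.isLt
        simp only [hLdef]
        omega
      exact lt_of_le_of_lt (hmono.monotone hiL) hxgt
    -- the discrete measure
    set q : Fin (2*N) → ℝ := fun j =>
      if h : j.val + 1 < 2*N then ξs ⟨(j.val+1)/2, by omega⟩ else x with hqdef
    have hq_mem : ∀ j, q j ∈ Ξ := by
      intro j
      by_cases h : j.val + 1 < 2*N
      · rw [hqdef]; simp only [dif_pos h]; exact hmem _
      · rw [hqdef]; simp only [dif_neg h]; exact hxΞ
    set μ : Measure ℝ := ((2*N : ℕ) : ℝ≥0∞)⁻¹ • ∑ j : Fin (2*N), Measure.dirac (q j)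
      with hμdef
    have h2N0 : ((2*N:ℕ) : ℝ≥0∞) ≠ 0 := by
      exact_mod_cast (Nat.pos_of_ne_zero (by omega)).ne'
    have h2Ntop : ((2*N:ℕ) : ℝ≥0∞) ≠ ⊤ := ENNReal.natCast_ne_top _
    have hcount : ∀ t : Set ℝ,
        μ t = ((2*N:ℕ) : ℝ≥0∞)⁻¹ * ∑ j : Fin (2*N), t.indicator (fun _ => (1:ℝ≥0∞)) (q j) := by
      intro t
      rw [hμdef, Measure.smul_apply, Measure.finset_sum_apply, smul_eq_mul]
      congr 1
      exact Finset.sum_congr rfl fun j _ => Measure.dirac_apply (q j) t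
    have hprob : IsProbabilityMeasure μ := by
      constructor
      rw [hcount]
      have hs : ∑ j : Fin (2*N), Set.univ.indicator (fun _ => (1:ℝ≥0∞)) (q j)
          = ((2*N : ℕ) : ℝ≥0∞) := by
        simp
      rw [hs]
      exact ENNReal.inv_mul_cancel h2N0 h2Ntop
    have hΞc : μ Ξᶜ = 0 := by
      rw [hcount]
      have hs : ∑ j : Fin (2*N), Ξᶜ.indicator (fun _ => (1:ℝ≥0∞)) (q j) = 0 := by
        refine Finset.sum_eq_zero fun j _ => ?_
        exact Set.indicator_of_notMem (by simp only [Set.mem_compl_iff, not_not]; exact hq_mem j) _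
      rw [hs, mul_zero]
    -- measure of Iic
    have hIic : ∀ k : Fin N,
        (μ (Set.Iic (ξs k))).toReal = (2*(k:ℕ)+1 : ℝ) / (2*(N:ℝ)) := by
      intro k
      have hpred : ∀ j : Fin (2*N), (q j ∈ Set.Iic (ξs k)) ↔ j.val ≤ 2*k.val := by
        intro j
        by_cases h : j.val + 1 < 2*N
        · rw [hqdef]
          simp only [dif_pos h, Set.mem_Iic]
          rw [hmono.le_iff_le]
          show ((j:ℕ)+1)/2 ≤ (k:ℕ) ↔ (j:ℕ) ≤ 2*(k:ℕ)
          omega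
        · rw [hqdef]
          simp only [dif_neg h, Set.mem_Iic]
          have hj : j.val = 2*N - 1 := by have := j.isLt; omega
          constructor
          · intro hle; exact absurd hle (not_le.2 (hxgt' k))
          · intro hle; exfalso; have := k.isLt; omega
      have hcard : ∑ j : Fin (2*N), (Set.Iic (ξs k)).indicator (fun _ => (1:ℝ≥0∞)) (q j)
          = ((2*k.val + 1 : ℕ) : ℝ≥0∞) := by
        have hstep : ∀ j : Fin (2*N), (Set.Iic (ξs k)).indicator (fun _ => (1:ℝ≥0∞)) (q j)
            = (if j.val ≤ 2*k.val then (1:ℝ≥0∞) else 0) := by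
          intro j
          by_cases h : j.val ≤ 2*k.val
          · rw [Set.indicator_of_mem ((hpred j).2 h), if_pos h]
          · rw [Set.indicator_of_notMem (fun hh => h ((hpred j).1 hh)), if_neg h]
        rw [Finset.sum_congr rfl fun j _ => hstep j, Finset.sum_boole]
        congr 1
        have hlt : 2*k.val < 2*N := by have := k.isLt; omega
        have heq : (Finset.univ.filter (fun j : Fin (2*N) => j.val ≤ 2*k.val))
            = Finset.Iic ⟨2*k.val, hlt⟩ := by
          ext j; simp [Fin.le_def]
        rw [heq, Fin.card_Iic]
      rw [hcount, hcard]
      rw [ENNReal.toReal_mul, ENNReal.toReal_inv, ENNReal.toReal_natCast, ENNReal.toReal_natCast]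
      push_cast
      rw [div_eq_inv_mul]
    -- the integral
    have hint : ∫ ξ, c ξ ∂μ = (2*(N:ℝ))⁻¹ * ∑ j : Fin (2*N), c (q j) := by
      rw [hμdef, integral_smul_measure,
        integral_finset_sum_measure (fun j _ => integrable_dirac' c (q j))]
      simp only [integral_dirac, smul_eq_mul]
      congr 1
      rw [ENNReal.toReal_inv]
      push_cast
      rfl
    -- lower bound on the sum
    have hlast_lt : 2*N-1 < 2*N := by omega
    set last : Fin (2*N) := ⟨2*N-1, hlast_lt⟩ with hlastdef
    have hqlast : q last = x := by
      rw [hqdef]; exact dif_neg (by simp [hlastdef]; omega)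
    have hsum_ge : (2*(N:ℝ))*(b+1) ≤ ∑ j : Fin (2*N), c (q j) := by
      have hsplit : c (q last) + ∑ j ∈ Finset.univ.erase last, c (q j)
          = ∑ j : Fin (2*N), c (q j) :=
        Finset.add_sum_erase Finset.univ (fun j => c (q j)) (Finset.mem_univ last)
      rw [← hsplit, hqlast]
      have hB' : ((2*N-1 : ℕ) : ℝ) * B ≤
          ∑ j ∈ Finset.univ.erase last, c (q j) := by
        have hcard : (Finset.univ.erase last).card = 2*N-1 := by
          rw [Finset.card_erase_of_mem (Finset.mem_univ _), Finset.card_univ, Fintype.card_fin]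
        have := Finset.card_nsmul_le_sum (Finset.univ.erase last)
          (fun j => c (q j)) B ?_
        · rw [hcard] at this
          simpa [nsmul_eq_mul] using this
        · intro j hj
          have hjne : j ≠ last := Finset.ne_of_mem_erase hj
          have hjlt : j.val + 1 < 2*N := by
            have h1 := j.isLt
            have h2 : j.val ≠ 2*N-1 := fun h => hjne (Fin.ext h)
            omega
          rw [hqdef]
          simp only [dif_pos hjlt]
          exact hBle _
      have hcast : ((2*N-1 : ℕ) : ℝ) = 2*(N:ℝ)-1 := by
        push_cast [Nat.cast_sub (by omega : 1 ≤ 2*N)]; ring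
      rw [hcast] at hB'
      have hKB : K + (2*(N:ℝ)-1)*B ≤ c x + ∑ j ∈ Finset.univ.erase last, c (q j) :=
        add_le_add hxK hB'
      rw [hKdef] at hKB
      linarith
    have hint_gt : b < ∫ ξ, c ξ ∂μ := by
      rw [hint]
      have h2Npos : (0:ℝ) < 2*(N:ℝ) := by linarith
      have := mul_le_mul_of_nonneg_left hsum_ge (inv_nonneg.2 h2Npos.le)
      calc b < b + 1 := lt_add_one b
        _ = (2*(N:ℝ))⁻¹ * ((2*(N:ℝ))*(b+1)) := (inv_mul_cancel_left₀ h2Npos.ne' (b+1)).symm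
        _ ≤ _ := this
    refine ⟨μ, ⟨hprob, hΞc, ?_⟩, hint_gt⟩
    intro k
    rw [hIic k]
    have hk1 : ((k:ℕ):ℝ) + 1 ≤ N := by exact_mod_cast k.isLt
    constructor
    · have : ((k:ℕ) + 1 : ℝ) / N - (2*(k:ℕ)+1 : ℝ) / (2*(N:ℝ)) = 1 / (2*(N:ℝ)) := by
        field_simp; ring
      rw [this]; exact hQ.le
    · have : (2*(k:ℕ)+1 : ℝ) / (2*(N:ℝ)) - ((k:ℕ) : ℝ) / N = 1 / (2*(N:ℝ)) := by
        field_simp; ring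
      rw [this]; exact hQ.le
  -- conclude
  rw [iSup_eq_top]
  intro e he
  have : ∃ r : ℝ, e < (r : EReal) := by
    induction e with
    | bot => exact ⟨0, by simp⟩
    | coe r => exact ⟨r+1, by exact_mod_cast lt_add_one r⟩
    | top => simp at he
  obtain ⟨r, hr⟩ := this
  obtain ⟨F₀, hF₀, hFr⟩ := key r
  refine ⟨F₀, ?_⟩
  have h' : e < ((∫ ξ, c ξ ∂F₀ : ℝ) : EReal) := lt_trans hr (by exact_mod_cast hFr)
  exact h'.trans_le (le_iSup (fun _ : F₀ ∈ _ => ((∫ ξ, c ξ ∂F₀ : ℝ) : EReal)) hF₀)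
end

section
/- Suppose Ξ ⊆ ℝ^d is closed and bounded, F is a Borel probability measure on Ξ, ξ¹, ξ², … are i.i.d. draws from F, and 𝓕_N = 𝓕_N(ξ¹,…,ξ^N) are data-dependent sets of Borel probability measures on Ξ. Suppose that for every cost function c : ℝ^d × Ξ → ℝ (with decision set X = ℝ^d) that is equicontinuous in x over Ξ, continuous in ξ for each x, and satisfies lim_{‖x‖→∞} c(x;ξ) = ∞ uniformly over ξ in some Borel D ⊆ Ξ with F(D) > 0 together with liminf_{‖x‖→∞} inf_{ξ∉D} c(x;ξ) > −∞, the uniform convergence sup_{x∈K} |sup_{F₀∈𝓕_N} E_{F₀}[c(x;ξ)] − E_F[c(x;ξ)]| → 0 holds almost surely for every compact K ⊆ ℝ^d. Then the test with confidence regions (𝓕_N) is uniformly consistent for F. -/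
open MeasureTheory Filter Topology
open scoped ENNReal

/-- The worst-case expected cost `C(x;𝓕) = sup_{F₀ ∈ 𝓕} E_{F₀}[c(x;ξ)]`,
as an extended real number, over a set of (bundled) probability measures;
here the decision space is `ℝ^d`, the same space the random vector lives in. -/
noncomputable def worstCaseP {d : ℕ}
    (c : EuclideanSpace ℝ (Fin d) → EuclideanSpace ℝ (Fin d) → ℝ)
    (𝓕 : Set (ProbabilityMeasure (EuclideanSpace ℝ (Fin d))))
    (x : EuclideanSpace ℝ (Fin d)) : EReal :=
  ⨆ F₀ ∈ 𝓕, ((∫ ξ, c x ξ ∂F₀.toMeasure : ℝ) : EReal)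

/-- convergence for all costs implies uniform consistency; the
"only if" direction of the characterization theorem, for bounded `Ξ`.
Suppose `Ξ ⊆ ℝ^d` is closed and bounded and that for every cost function
`c : ℝ^d × Ξ → ℝ` (with decision space `X = ℝ^d`) that is equicontinuous in `x` over `Ξ`,
continuous in `ξ`, and coercive in the stated sense, the worst-case objective
`C(·;𝓕_N)` converges to `E_F[c(·;ξ)]` uniformly on compacts almost surely.  Then the
test with confidence regions `(𝓕_N)` is uniformly consistent for `F`. -/
theorem stmt6 {d : ℕ} {Ω : Type*} [MeasurableSpace Ω]
    (P : Measure Ω) [IsProbabilityMeasure P]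
    (Ξ : Set (EuclideanSpace ℝ (Fin d))) (hΞcl : IsClosed Ξ)
    (hΞbdd : Bornology.IsBounded Ξ)
    (F : ProbabilityMeasure (EuclideanSpace ℝ (Fin d))) (hFsupp : F.toMeasure Ξᶜ = 0)
    (𝓕 : ℕ → Ω → Set (ProbabilityMeasure (EuclideanSpace ℝ (Fin d))))
    (h𝓕ne : ∀ N ω, (𝓕 N ω).Nonempty)
    (h𝓕supp : ∀ N ω, ∀ G ∈ 𝓕 N ω, G.toMeasure Ξᶜ = 0)
    (hyp : ∀ c : EuclideanSpace ℝ (Fin d) → EuclideanSpace ℝ (Fin d) → ℝ,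
      -- equicontinuity in `x` over `Ξ`
      (∀ x : EuclideanSpace ℝ (Fin d), ∀ ε > (0:ℝ), ∃ δ > (0:ℝ),
        ∀ x' : EuclideanSpace ℝ (Fin d), ‖x - x'‖ < δ → ∀ ζ ∈ Ξ, |c x ζ - c x' ζ| < ε) →
      -- continuity in `ξ`
      (∀ x, ContinuousOn (c x) Ξ) →
      -- coercivity: uniform on some `D ⊆ Ξ` of positive measure, bounded below off `D`
      (∃ D : Set (EuclideanSpace ℝ (Fin d)), MeasurableSet D ∧ D ⊆ Ξ ∧
        0 < F.toMeasure D ∧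
        (∀ M : ℝ, ∃ R : ℝ, ∀ x : EuclideanSpace ℝ (Fin d), R ≤ ‖x‖ → ∀ ζ ∈ D, M ≤ c x ζ) ∧
        (∃ m R : ℝ, ∀ x : EuclideanSpace ℝ (Fin d), R ≤ ‖x‖ → ∀ ζ ∈ Ξ \ D, m ≤ c x ζ)) →
      -- conclusion of the hypothesis: a.s. uniform convergence on compacts
      ∀ᵐ ω ∂P, ∀ K : Set (EuclideanSpace ℝ (Fin d)), IsCompact K →
        ∀ ε > (0:ℝ), ∀ᶠ N in atTop, ∀ x ∈ K,
          (((∫ ζ, c x ζ ∂F.toMeasure) - ε : ℝ) : EReal) ≤ worstCaseP c (𝓕 N ω) x ∧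
            worstCaseP c (𝓕 N ω) x ≤ (((∫ ζ, c x ζ ∂F.toMeasure) + ε : ℝ) : EReal)) :
    -- uniform consistency of the test
    ∀ᵐ ω ∂P, ∀ G : ℕ → ProbabilityMeasure (EuclideanSpace ℝ (Fin d)),
      (∀ N, (G N).toMeasure Ξᶜ = 0) → ¬ Tendsto G atTop (𝓝 F) →
        ∃ᶠ N in atTop, G N ∉ 𝓕 N ω := by
  classical
  have hΞcomp : IsCompact Ξ := Metric.isCompact_of_isClosed_isBounded hΞcl hΞbdd
  haveI : CompactSpace ↥Ξ := isCompact_iff_compactSpace.mp hΞcomp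
  -- key a.s. event for a fixed bounded continuous test function
  have key : ∀ f : BoundedContinuousFunction (EuclideanSpace ℝ (Fin d)) ℝ, ∀ᵐ ω ∂P, ∀ ε > (0:ℝ),
      ∀ᶠ N in atTop, ∀ G' ∈ 𝓕 N ω,
        ∫ ζ, f ζ ∂G'.toMeasure ≤ ∫ ζ, f ζ ∂F.toMeasure + ε := by
    intro f
    have h := hyp (fun x ζ => f ζ + ‖x‖) ?_ ?_ ?_
    · filter_upwards [h] with ω hω ε hε
      have h0 := hω {0} isCompact_singleton ε hε
      filter_upwards [h0] with N hN G' hG'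
      have h1 := (hN 0 rfl).2
      have hle : ((∫ ζ, f ζ ∂G'.toMeasure : ℝ) : EReal)
          ≤ worstCaseP (fun x ζ => f ζ + ‖x‖) (𝓕 N ω) 0 := by
        have h2 := le_biSup
          (fun F₀ : ProbabilityMeasure (EuclideanSpace ℝ (Fin d)) =>
            ((∫ ζ, ((fun (x : EuclideanSpace ℝ (Fin d)) ζ => f ζ + ‖x‖) 0 ζ) ∂F₀.toMeasure : ℝ) : EReal)) hG'
        simpa [worstCaseP, norm_zero] using h2
      have h3 : ((∫ ζ, f ζ ∂G'.toMeasure : ℝ) : EReal)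
          ≤ ((∫ ζ, f ζ ∂F.toMeasure + ε : ℝ) : EReal) := by
        refine hle.trans (h1.trans ?_)
        simp [norm_zero]
      exact_mod_cast h3
    · intro x ε hε
      refine ⟨ε, hε, fun x' hx' ζ _ => ?_⟩
      have h4 : (f ζ + ‖x‖) - (f ζ + ‖x'‖) = ‖x‖ - ‖x'‖ := by ring
      rw [h4]
      exact lt_of_le_of_lt (abs_norm_sub_norm_le x x') hx'
    · intro x
      exact (f.continuous.add continuous_const).continuousOn
    · refine ⟨Ξ, hΞcl.measurableSet, subset_rfl, ?_, ?_, 0, 0, ?_⟩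
      · have h5 := measure_union_le (μ := F.toMeasure) Ξ Ξᶜ
        rw [Set.union_compl_self] at h5
        have h6 : (1:ℝ≥0∞) ≤ F.toMeasure Ξ := by
          simpa [hFsupp, measure_univ] using h5
        exact lt_of_lt_of_le (by norm_num) h6
      · intro M
        refine ⟨M + ‖f‖ + 1, fun x hx ζ _ => ?_⟩
        have h7 : ‖f ζ‖ ≤ ‖f‖ := f.norm_coe_le_norm ζ
        rw [Real.norm_eq_abs] at h7
        have h8 : -‖f‖ ≤ f ζ := neg_le_of_abs_le h7
        show M ≤ f ζ + ‖x‖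
        linarith
      · intro x hx ζ hζ
        simp at hζ
  -- a countable dense family of test functions
  obtain ⟨S, hScount, hSdense⟩ := TopologicalSpace.exists_countable_dense C(↥Ξ, ℝ)
  have hext : ∀ φ : C(↥Ξ, ℝ), ∃ g : BoundedContinuousFunction (EuclideanSpace ℝ (Fin d)) ℝ,
      ∀ ζ : ↥Ξ, g ζ = φ ζ := by
    intro φ
    obtain ⟨g, -, hg⟩ := BoundedContinuousFunction.exists_norm_eq_restrict_eq_of_closed
      (BoundedContinuousFunction.mkOfCompact φ) hΞcl
    refine ⟨g, fun ζ => ?_⟩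
    have := DFunLike.congr_fun hg ζ
    simpa [BoundedContinuousFunction.restrict_apply] using this
  choose ext hextEq using hext
  have main : ∀ᵐ ω ∂P, ∀ φ ∈ S,
      (∀ ε > (0:ℝ), ∀ᶠ N in atTop, ∀ G' ∈ 𝓕 N ω,
        ∫ ζ, (ext φ) ζ ∂G'.toMeasure ≤ ∫ ζ, (ext φ) ζ ∂F.toMeasure + ε) ∧
      (∀ ε > (0:ℝ), ∀ᶠ N in atTop, ∀ G' ∈ 𝓕 N ω,
        ∫ ζ, (-(ext φ)) ζ ∂G'.toMeasure ≤ ∫ ζ, (-(ext φ)) ζ ∂F.toMeasure + ε) :=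
    (ae_ball_iff hScount).mpr fun φ _ => ((key (ext φ)).and (key (-(ext φ))))
  filter_upwards [main] with ω hω G hGsupp hGnot
  by_contra hcon
  rw [Filter.not_frequently] at hcon
  have hmem : ∀ᶠ N in atTop, G N ∈ 𝓕 N ω := by
    filter_upwards [hcon] with N hN
    exact not_not.mp hN
  apply hGnot
  rw [ProbabilityMeasure.tendsto_iff_forall_integral_tendsto]
  intro g
  rw [Metric.tendsto_atTop]
  intro ε hε
  -- approximate g by a member of the dense family on Ξ
  obtain ⟨φ, hφS, hφdist⟩ := Metric.mem_closure_iff.mp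
    (hSdense ((g : C(EuclideanSpace ℝ (Fin d), ℝ)).restrict Ξ)) (ε/4) (by linarith)
  set f : BoundedContinuousFunction (EuclideanSpace ℝ (Fin d)) ℝ := ext φ with hf
  have hfg : ∀ ζ ∈ Ξ, |f ζ - g ζ| ≤ ε/4 := by
    intro ζ hζ
    have h1 : f ζ = φ ⟨ζ, hζ⟩ := hextEq φ ⟨ζ, hζ⟩
    have h2 : dist (((g : C(EuclideanSpace ℝ (Fin d), ℝ)).restrict Ξ) ⟨ζ, hζ⟩) (φ ⟨ζ, hζ⟩)
        ≤ dist ((g : C(EuclideanSpace ℝ (Fin d), ℝ)).restrict Ξ) φ :=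
      ContinuousMap.dist_apply_le_dist _
    rw [ContinuousMap.restrict_apply, Real.dist_eq] at h2
    have h3 : |g ζ - φ ⟨ζ, hζ⟩| < ε/4 := lt_of_le_of_lt h2 hφdist
    rw [h1, abs_sub_comm]
    exact le_of_lt h3
  -- integrals of f and g are close for measures supported in Ξ
  have intbound : ∀ μ : ProbabilityMeasure (EuclideanSpace ℝ (Fin d)), μ.toMeasure Ξᶜ = 0 →
      |∫ ζ, f ζ ∂μ.toMeasure - ∫ ζ, g ζ ∂μ.toMeasure| ≤ ε/4 := by
    intro μ hμ
    rw [← integral_sub (f.integrable _) (g.integrable _)]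
    have hb : ∀ᵐ ζ ∂μ.toMeasure, ‖f ζ - g ζ‖ ≤ ε/4 := by
      rw [ae_iff]
      refine measure_mono_null (fun ζ hζ => ?_) hμ
      simp only [Set.mem_setOf_eq, Real.norm_eq_abs, not_le] at hζ
      intro hζΞ
      exact absurd (hfg ζ hζΞ) (not_le.mpr hζ)
    calc |∫ ζ, (f ζ - g ζ) ∂μ.toMeasure| = ‖∫ ζ, (f ζ - g ζ) ∂μ.toMeasure‖ :=
          (Real.norm_eq_abs _).symm
      _ ≤ ε/4 * (μ.toMeasure Set.univ).toReal := norm_integral_le_of_norm_le_const hb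
      _ = ε/4 := by simp
  obtain ⟨hup, hlow⟩ := hω φ hφS
  have E1 := hup (ε/4) (by linarith)
  have E2 := hlow (ε/4) (by linarith)
  have Ev : ∀ᶠ N in atTop, dist (∫ ζ, g ζ ∂(G N).toMeasure) (∫ ζ, g ζ ∂F.toMeasure) < ε := by
    filter_upwards [E1, E2, hmem] with N h1 h2 hm
    have ha := h1 (G N) hm
    have hb := h2 (G N) hm
    have hneg : ∀ μ : Measure (EuclideanSpace ℝ (Fin d)),
        ∫ ζ, (-f) ζ ∂μ = -∫ ζ, f ζ ∂μ := by
      intro μ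
      simp only [BoundedContinuousFunction.coe_neg, Pi.neg_apply]
      exact integral_neg _
    rw [hneg, hneg] at hb
    have i1 := abs_le.mp (intbound (G N) (hGsupp N))
    have i2 := abs_le.mp (intbound F hFsupp)
    rw [Real.dist_eq, abs_lt]
    constructor <;> linarith
  obtain ⟨N₀, hN₀⟩ := eventually_atTop.mp Ev
  exact ⟨N₀, hN₀⟩
end

section
/- Suppose the test with confidence regions (𝓕_N) is uniformly consistent for F, c is equicontinuous in x over Ξ and c(x;·) is continuous on Ξ with E_F|c(x;ξ)| < ∞ for each x ∈ X, and either Ξ is bounded, or there exists a continuous φ : Ξ → [0,∞) such that almost surely sup_{F₀∈𝓕_N} |E_{F₀}[φ(ξ)] − (1/N)Σ_{i=1}^N φ(ξ^i)| → 0 and, for each x ∈ X, |c(x;ξ)| = O(φ(ξ)). Then almost surely the following holds: for every x ∈ X and every sequence (G_N) of Borel probability measures with G_N ∈ 𝓕_N for every N, one has E_{G_N}[c(x;ξ)] → E_F[c(x;ξ)]. -/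
/-!
Uniform consistency forces every sequence `G_N ∈ 𝓕_N` to converge weakly to `F`, and the strong
law of large numbers for `φ(ξⁱ)`, combined with the uniform closeness of `E_{G}[φ]` to the
empirical means, gives `E_{G_N}[φ] → E_F[φ]`. Extending `c(x;·)` and `φ` from the closed set `Ξ`
(Tietze) and clamping, `c(x;·)` becomes a continuous function dominated by a continuous
`B = ν' + η' φ`, without changing any integral against measures carried by `Ξ`. Fatou's lemma for
weakly convergent measures applied to `B + c` and `B - c`, together with `E_{G_N}[B] → E_F[B]`,
bounds `E_{G_N}[c]` from below and above. If `Ξ` is bounded it is compact, and `φ = 0` works.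
-/

open MeasureTheory Filter Topology

theorem IsClosed.exists_continuous_eqOn {X : Type*} [TopologicalSpace X] [NormalSpace X]
    {s : Set X} (hs : IsClosed s) {f : X → ℝ} (hf : ContinuousOn f s) :
    ∃ g : X → ℝ, Continuous g ∧ Set.EqOn g f s := by
  obtain ⟨g, hg⟩ := ContinuousMap.exists_restrict_eq hs ⟨s.domRestrict f, hf.domRestrict⟩
  exact ⟨g, g.continuous, fun x hx => ContinuousMap.congr_fun hg ⟨x, hx⟩⟩

theorem IsClosed.exists_continuous_eqOn_abs_le {X : Type*} [TopologicalSpace X] [NormalSpace X]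
    {s : Set X} (hs : IsClosed s) {f B : X → ℝ} (hf : ContinuousOn f s) (hB : Continuous B)
    (hB0 : ∀ x, 0 ≤ B x) (hfB : ∀ x ∈ s, |f x| ≤ B x) :
    ∃ g : X → ℝ, Continuous g ∧ Set.EqOn g f s ∧ ∀ x, |g x| ≤ B x := by
  obtain ⟨C, hC, hCf⟩ := hs.exists_continuous_eqOn hf
  refine ⟨fun x => max (-B x) (min (B x) (C x)), by fun_prop, fun x hx => ?_, fun x => ?_⟩
  · obtain ⟨h₁, h₂⟩ := abs_le.1 (hfB x hx)
    simp only [hCf hx, min_eq_right h₂, max_eq_right h₁]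
  · exact abs_le.2 ⟨le_max_left _ _, max_le (by linarith [hB0 x]) (min_le_left _ _)⟩

namespace MeasureTheory.ProbabilityMeasure

variable {E : Type*} [MeasurableSpace E] [TopologicalSpace E] [OpensMeasurableSpace E]
  [HasOuterApproxClosed E] {μ : ProbabilityMeasure E} {μs : ℕ → ProbabilityMeasure E}

theorem eventually_lt_integral_of_tendsto (hlim : Tendsto μs atTop (𝓝 μ)) {g : E → ℝ}
    (hg : Continuous g) (hg0 : 0 ≤ g) (hgμs : ∀ n, Integrable g (μs n))
    {b : ℝ} (hb : b < ∫ x, g x ∂(μ : Measure E)) :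
    ∀ᶠ n in atTop, b < ∫ x, g x ∂(μs n : Measure E) := by
  rcases lt_or_ge b 0 with hb0 | hb0
  · exact Eventually.of_forall fun n => hb0.trans_le (integral_nonneg hg0)
  have hfatou := lintegral_le_liminf_lintegral_of_forall_isOpen_measure_le_liminf_measure hg hg0
    fun U hU => le_liminf_measure_open_of_tendsto hlim hU
  rw [integral_eq_lintegral_of_nonneg_ae (ae_of_all _ hg0) hg.aestronglyMeasurable] at hb
  have hbμ : ENNReal.ofReal b < ∫⁻ x, ENNReal.ofReal (g x) ∂(μ : Measure E) :=
    ((ENNReal.ofReal_lt_ofReal_iff (hb0.trans_lt hb)).2 hb).trans_le ENNReal.ofReal_toReal_le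
  filter_upwards [eventually_lt_of_lt_liminf (hbμ.trans_le hfatou)] with n hn
  rw [integral_eq_lintegral_of_nonneg_ae (ae_of_all _ hg0) hg.aestronglyMeasurable]
  exact (ENNReal.ofReal_lt_iff_lt_toReal hb0 (hgμs n).lintegral_lt_top.ne).1 hn

section Domination

variable (hlim : Tendsto μs atTop (𝓝 μ)) {f B : E → ℝ} (hf : Continuous f) (hB : Continuous B)
  (hfB : ∀ x, |f x| ≤ B x) (hBμ : Integrable B μ) (hBμs : ∀ n, Integrable B (μs n))
  (hBlim : Tendsto (fun n => ∫ x, B x ∂(μs n : Measure E)) atTop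
    (𝓝 (∫ x, B x ∂(μ : Measure E))))
include hlim hf hB hfB hBμ hBμs hBlim

theorem eventually_lt_integral_of_abs_le {a : ℝ} (ha : a < ∫ x, f x ∂(μ : Measure E)) :
    ∀ᶠ n in atTop, a < ∫ x, f x ∂(μs n : Measure E) := by
  have hfi : ∀ ρ : Measure E, Integrable B ρ → Integrable f ρ := fun ρ hρ =>
    hρ.mono' hf.aestronglyMeasurable (ae_of_all _ fun x => (Real.norm_eq_abs _).trans_le (hfB x))
  have hsum := eventually_lt_integral_of_tendsto hlim (g := fun x => B x + f x) (hB.add hf)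
    (fun x => neg_le_iff_add_nonneg'.1 ((neg_le_neg (hfB x)).trans (neg_abs_le (f x))))
    (fun n => (hBμs n).add (hfi _ (hBμs n)))
    (b := ∫ x, B x + f x ∂(μ : Measure E) - (∫ x, f x ∂(μ : Measure E) - a) / 2)
    (by linarith)
  have hB_lt : ∀ᶠ n in atTop, ∫ x, B x ∂(μs n : Measure E) <
      ∫ x, B x ∂(μ : Measure E) + (∫ x, f x ∂(μ : Measure E) - a) / 2 :=
    hBlim.eventually (gt_mem_nhds (by linarith))
  filter_upwards [hsum, hB_lt] with n hsum_n hB_n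
  rw [integral_add (hBμs n) (hfi _ (hBμs n)), integral_add hBμ (hfi _ hBμ)] at hsum_n
  linarith

theorem tendsto_integral_of_abs_le :
    Tendsto (fun n => ∫ x, f x ∂(μs n : Measure E)) atTop (𝓝 (∫ x, f x ∂(μ : Measure E))) := by
  refine tendsto_order.2 ⟨fun a ha =>
    eventually_lt_integral_of_abs_le hlim hf hB hfB hBμ hBμs hBlim ha, fun a ha => ?_⟩
  have hneg := eventually_lt_integral_of_abs_le hlim (f := fun x => -f x) hf.neg hB
    (fun x => (abs_neg (f x)).trans_le (hfB x)) hBμ hBμs hBlim (a := -a)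
    (by rw [integral_neg]; linarith)
  filter_upwards [hneg] with n hn
  rw [integral_neg] at hn
  linarith

end Domination

theorem tendsto_integral_of_abs_le_add_mul [NormalSpace E] {s : Set E} (hs : IsClosed s)
    (hμ : (μ : Measure E) sᶜ = 0) (hμs : ∀ n, (μs n : Measure E) sᶜ = 0)
    (hlim : Tendsto μs atTop (𝓝 μ)) {f φ : E → ℝ} (hf : ContinuousOn f s)
    (hφ : ContinuousOn φ s) (hφ0 : ∀ x ∈ s, 0 ≤ φ x) (hφμ : Integrable φ μ)
    (hφμs : ∀ n, Integrable φ (μs n))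
    (hφlim : Tendsto (fun n => ∫ x, φ x ∂(μs n : Measure E)) atTop
      (𝓝 (∫ x, φ x ∂(μ : Measure E))))
    {ν η : ℝ} (hfφ : ∀ x ∈ s, |f x| ≤ ν + η * φ x) :
    Tendsto (fun n => ∫ x, f x ∂(μs n : Measure E)) atTop (𝓝 (∫ x, f x ∂(μ : Measure E))) := by
  obtain ⟨Φ, hΦ, hΦφ⟩ := hs.exists_continuous_eqOn hφ
  set B : E → ℝ := fun x => |ν| + |η| * |Φ x|
  have hBφ : ∀ x ∈ s, B x = |ν| + |η| * φ x := fun x hx => by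
    simp only [B, hΦφ hx, abs_of_nonneg (hφ0 x hx)]
  obtain ⟨g, hg, hgf, hgB⟩ := hs.exists_continuous_eqOn_abs_le hf (by fun_prop)
    (fun x => by positivity) fun x hx => (hfφ x hx).trans <| (hBφ x hx).symm ▸
      add_le_add (le_abs_self ν) (mul_le_mul_of_nonneg_right (le_abs_self η) (hφ0 x hx))
  have hsupp : ∀ ρ : ProbabilityMeasure E, (ρ : Measure E) sᶜ = 0 → Integrable φ ρ →
      Integrable B ρ ∧ ∫ x, B x ∂(ρ : Measure E) = |ν| + |η| * ∫ x, φ x ∂(ρ : Measure E) ∧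
        ∫ x, g x ∂(ρ : Measure E) = ∫ x, f x ∂(ρ : Measure E) := by
    intro ρ hρ hφρ
    have hae : ∀ᵐ x ∂(ρ : Measure E), x ∈ s := mem_ae_iff.2 hρ
    have hBae : B =ᵐ[(ρ : Measure E)] fun x => |ν| + |η| * φ x := hae.mono hBφ
    refine ⟨((integrable_const _).add (hφρ.const_mul _)).congr hBae.symm, ?_,
      integral_congr_ae (hae.mono hgf)⟩
    rw [integral_congr_ae hBae, integral_add (integrable_const _) (hφρ.const_mul _),
      integral_const_mul]
    simp
  obtain ⟨hBμ, hBμ_eq, hgμ⟩ := hsupp μ hμ hφμ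
  have hBlim : Tendsto (fun n => ∫ x, B x ∂(μs n : Measure E)) atTop
      (𝓝 (∫ x, B x ∂(μ : Measure E))) := by
    rw [hBμ_eq]
    refine ((hφlim.const_mul _).const_add _).congr fun n => ?_
    rw [(hsupp _ (hμs n) (hφμs n)).2.1]
  rw [← hgμ]
  refine (tendsto_integral_of_abs_le hlim hg (by fun_prop) hgB hBμ
    (fun n => (hsupp _ (hμs n) (hφμs n)).1) hBlim).congr fun n => ?_
  exact (hsupp _ (hμs n) (hφμs n)).2.2

end MeasureTheory.ProbabilityMeasure

namespace ProbabilityTheory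

theorem iIndepFun.ae_tendsto_average_comp {Ω E : Type*} [MeasurableSpace Ω]
    {P : Measure Ω} [MeasurableSpace E] {ξ : ℕ → Ω → E} (hiid : iIndepFun ξ P)
    (hξ : ∀ i, AEMeasurable (ξ i) P) {F : Measure E} (hdist : ∀ i, P.map (ξ i) = F)
    {g : E → ℝ} (hg : Integrable g F) :
    ∀ᵐ ω ∂P, Tendsto (fun N : ℕ => (∑ i ∈ Finset.range N, g (ξ i ω)) / N) atTop
      (𝓝 (∫ x, g x ∂F)) := by
  obtain rfl := hdist 0
  have hgm : ∀ i, AEMeasurable g (P.map (ξ i)) := fun i => (hdist i).symm ▸ hg.aemeasurable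
  have hident : ∀ i, IdentDistrib (g ∘ ξ i) (g ∘ ξ 0) P P := fun i =>
    (IdentDistrib.mk (hξ i) (hξ 0) (hdist i)).comp_of_aemeasurable (hgm i)
  have hindep : Pairwise fun i j => IndepFun (g ∘ ξ i) (g ∘ ξ j) P := fun i j hij =>
    (hiid.indepFun hij).comp₀ (hξ i) (hξ j) (hgm i) (hgm j)
  have hslln := strong_law_ae_real _ (hg.comp_aemeasurable (hξ 0)) hindep hident
  rw [integral_map (hξ 0) hg.aestronglyMeasurable]
  exact hslln

end ProbabilityTheory

theorem stmt8_general {d dx : ℕ} {Ω : Type*} [MeasurableSpace Ω]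
    (P : Measure Ω)
    (Ξ : Set (EuclideanSpace ℝ (Fin d))) (hΞ : IsClosed Ξ)
    (X : Set (EuclideanSpace ℝ (Fin dx)))
    (F : ProbabilityMeasure (EuclideanSpace ℝ (Fin d))) (hFsupp : F.toMeasure Ξᶜ = 0)
    -- i.i.d. data drawn from `F`
    (ξ : ℕ → Ω → EuclideanSpace ℝ (Fin d)) (hξmeas : ∀ i, Measurable (ξ i))
    (hiid : ProbabilityTheory.iIndepFun ξ P)
    (hdist : ∀ i, Measure.map (ξ i) P = F.toMeasure)
    -- the data-dependent confidence regions
    (𝓕 : ℕ → Ω → Set (ProbabilityMeasure (EuclideanSpace ℝ (Fin d))))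
    -- the cost function
    (c : EuclideanSpace ℝ (Fin dx) → EuclideanSpace ℝ (Fin d) → ℝ)
    -- uniform consistency
    (hUC : ∀ᵐ ω ∂P, ∀ G : ℕ → ProbabilityMeasure (EuclideanSpace ℝ (Fin d)),
      (∀ N, (G N).toMeasure Ξᶜ = 0) → ¬ Tendsto G atTop (𝓝 F) →
        ∃ᶠ N in atTop, G N ∉ 𝓕 N ω)
    -- equicontinuity in `x`, continuity in `ξ`, integrability under `F` and over `𝓕_N`
    (hcont : ∀ x ∈ X, ContinuousOn (c x) Ξ)
    -- `Ξ` bounded, or growth control via `φ`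
    (hgrow : Bornology.IsBounded Ξ ∨
      ∃ φ : EuclideanSpace ℝ (Fin d) → ℝ, ContinuousOn φ Ξ ∧ (∀ ζ ∈ Ξ, 0 ≤ φ ζ) ∧
        Integrable φ F.toMeasure ∧
        (∀ N ω, ∀ G ∈ 𝓕 N ω, Integrable φ G.toMeasure) ∧
        (∀ᵐ ω ∂P, ∀ ε > (0:ℝ), ∀ᶠ N in atTop, ∀ G ∈ 𝓕 N ω,
          |∫ ζ, φ ζ ∂G.toMeasure - (∑ i ∈ Finset.range N, φ (ξ i ω)) / N| ≤ ε) ∧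
        (∀ x ∈ X, ∃ ν η : ℝ, ∀ ζ ∈ Ξ, |c x ζ| ≤ ν + η * φ ζ)) :
    ∀ᵐ ω ∂P, ∀ x ∈ X, ∀ G : ℕ → ProbabilityMeasure (EuclideanSpace ℝ (Fin d)),
      (∀ N, (G N).toMeasure Ξᶜ = 0) → (∀ N, G N ∈ 𝓕 N ω) →
        Tendsto (fun N => ∫ ζ, c x ζ ∂(G N).toMeasure) atTop
          (𝓝 (∫ ζ, c x ζ ∂F.toMeasure)) := by
  obtain ⟨φ, hφ, hφ0, hφF, hφ𝓕, hφemp, hcφ⟩ := hgrow.elim (fun hbdd => ⟨0, continuousOn_const,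
    fun _ _ => le_rfl, integrable_zero _ _ _, fun _ _ _ _ => integrable_zero _ _ _,
    ae_of_all _ fun _ ε hε => Eventually.of_forall fun _ _ _ => by simpa using hε.le,
    fun x hx => by
      obtain ⟨ν, hν⟩ := (Metric.isCompact_of_isClosed_isBounded hΞ hbdd)
        |>.exists_bound_of_continuousOn (hcont x hx)
      exact ⟨ν, 0, fun ζ hζ => by simpa using hν ζ hζ⟩⟩) id
  have hLLN := hiid.ae_tendsto_average_comp (fun i => (hξmeas i).aemeasurable) hdist hφF
  filter_upwards [hUC, hφemp, hLLN] with ω hUCω hφω hLLNω x hx G hGΞ hG𝓕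
  have hGF : Tendsto G atTop (𝓝 F) := by
    by_contra hGF
    obtain ⟨N, hN⟩ := (hUCω G hGΞ hGF).exists
    exact hN (hG𝓕 N)
  have hφG : Tendsto (fun N => ∫ ζ, φ ζ ∂(G N).toMeasure) atTop
      (𝓝 (∫ ζ, φ ζ ∂F.toMeasure)) := by
    refine Metric.tendsto_nhds.2 fun ε hε => ?_
    filter_upwards [hφω (ε / 2) (half_pos hε), Metric.tendsto_nhds.1 hLLNω (ε / 2) (half_pos hε)]
      with N hN_emp hN_avg
    rw [Real.dist_eq] at hN_avg ⊢
    obtain ⟨h₁, h₂⟩ := abs_le.1 (hN_emp (G N) (hG𝓕 N))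
    obtain ⟨h₃, h₄⟩ := abs_lt.1 hN_avg
    exact abs_lt.2 ⟨by linarith, by linarith⟩
  obtain ⟨ν, η, hcνη⟩ := hcφ x hx
  exact ProbabilityMeasure.tendsto_integral_of_abs_le_add_mul hΞ hFsupp hGΞ hGF (hcont x hx)
    hφ hφ0 hφF (fun N => hφ𝓕 N ω (G N) (hG𝓕 N)) hφG hcνη

/-- convergence of expectations along sequences in the confidence
regions of a uniformly consistent test.
Suppose the test with confidence regions `𝓕 N ω` is uniformly consistent for `F`, the
cost family is equicontinuous in `x` and continuous in `ξ` with `E_F|c(x;ξ)| < ∞`, and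
either `Ξ` is bounded or there is a growth function `φ` whose expectations are uniformly
close over `𝓕_N` to its empirical averages with `|c(x;·)| = O(φ)`.  Then almost surely,
for every `x ∈ X` and every sequence `G_N ∈ 𝓕_N`, `E_{G_N}[c(x;ξ)] → E_F[c(x;ξ)]`. -/
theorem stmt8 {d dx : ℕ} {Ω : Type*} [MeasurableSpace Ω]
    (P : Measure Ω) [IsProbabilityMeasure P]
    (Ξ : Set (EuclideanSpace ℝ (Fin d))) (hΞ : IsClosed Ξ)
    (X : Set (EuclideanSpace ℝ (Fin dx))) (hXne : X.Nonempty)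
    (F : ProbabilityMeasure (EuclideanSpace ℝ (Fin d))) (hFsupp : F.toMeasure Ξᶜ = 0)
    -- i.i.d. data drawn from `F`
    (ξ : ℕ → Ω → EuclideanSpace ℝ (Fin d)) (hξmeas : ∀ i, Measurable (ξ i))
    (hiid : ProbabilityTheory.iIndepFun ξ P)
    (hdist : ∀ i, Measure.map (ξ i) P = F.toMeasure)
    -- the data-dependent confidence regions
    (𝓕 : ℕ → Ω → Set (ProbabilityMeasure (EuclideanSpace ℝ (Fin d))))
    (h𝓕ne : ∀ N ω, (𝓕 N ω).Nonempty)
    (h𝓕supp : ∀ N ω, ∀ G ∈ 𝓕 N ω, G.toMeasure Ξᶜ = 0)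
    -- the cost function
    (c : EuclideanSpace ℝ (Fin dx) → EuclideanSpace ℝ (Fin d) → ℝ)
    (hcmeas : ∀ x ∈ X, Measurable (c x))
    -- uniform consistency
    (hUC : ∀ᵐ ω ∂P, ∀ G : ℕ → ProbabilityMeasure (EuclideanSpace ℝ (Fin d)),
      (∀ N, (G N).toMeasure Ξᶜ = 0) → ¬ Tendsto G atTop (𝓝 F) →
        ∃ᶠ N in atTop, G N ∉ 𝓕 N ω)
    -- equicontinuity in `x`, continuity in `ξ`, integrability under `F` and over `𝓕_N`
    (hequi : ∀ x ∈ X, ∀ ε > (0:ℝ), ∃ δ > (0:ℝ), ∀ x' ∈ X, ‖x - x'‖ < δ →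
      ∀ ζ ∈ Ξ, |c x ζ - c x' ζ| < ε)
    (hcont : ∀ x ∈ X, ContinuousOn (c x) Ξ)
    (hFint : ∀ x ∈ X, Integrable (c x) F.toMeasure)
    (h𝓕int : ∀ N ω, ∀ G ∈ 𝓕 N ω, ∀ x ∈ X, Integrable (c x) G.toMeasure)
    -- `Ξ` bounded, or growth control via `φ`
    (hgrow : Bornology.IsBounded Ξ ∨
      ∃ φ : EuclideanSpace ℝ (Fin d) → ℝ, ContinuousOn φ Ξ ∧ (∀ ζ ∈ Ξ, 0 ≤ φ ζ) ∧
        Integrable φ F.toMeasure ∧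
        (∀ N ω, ∀ G ∈ 𝓕 N ω, Integrable φ G.toMeasure) ∧
        (∀ᵐ ω ∂P, ∀ ε > (0:ℝ), ∀ᶠ N in atTop, ∀ G ∈ 𝓕 N ω,
          |∫ ζ, φ ζ ∂G.toMeasure - (∑ i ∈ Finset.range N, φ (ξ i ω)) / N| ≤ ε) ∧
        (∀ x ∈ X, ∃ ν η : ℝ, ∀ ζ ∈ Ξ, |c x ζ| ≤ ν + η * φ ζ)) :
    ∀ᵐ ω ∂P, ∀ x ∈ X, ∀ G : ℕ → ProbabilityMeasure (EuclideanSpace ℝ (Fin d)),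
      (∀ N, (G N).toMeasure Ξᶜ = 0) → (∀ N, G N ∈ 𝓕 N ω) →
        Tendsto (fun N => ∫ ζ, c x ζ ∂(G N).toMeasure) atTop
          (𝓝 (∫ ζ, c x ζ ∂F.toMeasure)) :=
  stmt8_general P Ξ hΞ X F hFsupp ξ hξmeas hiid hdist 𝓕 c hUC hcont hgrow
end

section
/- Let Ξ = {1,…,n}, let p be a probability mass function on Ξ with the data ξ¹, ξ², … i.i.d. from p, and let p̂_N(j) = (1/N)Σ_{i=1}^N 1[ξ^i = j] be the empirical frequencies. Let (Q_N) be positive reals with Q_N → 0. Then almost surely both of the following hold: (a) every sequence (q_N) of strictly positive probability mass functions on Ξ satisfying Σ_{j=1}^n (q_N(j) − p̂_N(j))²/q_N(j) ≤ Q_N² for all but finitely many N converges to p in total variation (Pearson's χ² test is uniformly consistent); (b) every sequence (q_N) of probability mass functions on Ξ that are strictly positive wherever p̂_N is positive and satisfy 2 Σ_{j=1}^n p̂_N(j) log(p̂_N(j)/q_N(j)) ≤ Q_N² for all but finitely many N converges to p in total variation (the G-test is uniformly consistent), with the convention 0·log 0 = 0. -/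
/-!
Both test statistics control the squared ℓ¹ distance between `q_N` and the empirical frequencies
`p̂_N`: for Pearson's χ² by Cauchy–Schwarz, `(∑ |q - a|)² ≤ (∑ (q - a)² / q) (∑ q)`, and for the
G statistic through the Hellinger distance, `(∑ |q - a|)² ≤ 4 ∑ (√a - √q)² ≤ 4 KL(a ‖ q)`.
Hence `‖q_N - p̂_N‖₁ = O(Q_N) → 0`, while `p̂_N → p` almost surely by the strong law of large
numbers.
-/

open MeasureTheory Filter Topology
open scoped ENNReal

/-- The empirical frequency of category `j` among the first `N` data points. -/
noncomputable def empFreq {n : ℕ} (ξ : ℕ → Fin n) (N : ℕ) (j : Fin n) : ℝ :=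
  (∑ i ∈ Finset.range N, if ξ i = j then (1:ℝ) else 0) / N


open Finset Real ProbabilityTheory

section Divergences

variable {ι : Type*} [Fintype ι]

theorem sq_sum_abs_sub_le_chiSq (a q : ι → ℝ) (hq : ∀ j, 0 < q j) (hq1 : ∑ j, q j = 1) :
    (∑ j, |q j - a j|) ^ 2 ≤ ∑ j, (q j - a j) ^ 2 / q j := by
  simpa [hq1, sq_abs] using sq_sum_div_le_sum_sq_div univ (fun j => |q j - a j|)
    (fun j _ => hq j)

theorem sq_sum_abs_sub_le_hellinger {a q : ι → ℝ} (ha : ∀ j, 0 ≤ a j) (hq : ∀ j, 0 ≤ q j) :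
    (∑ j, |q j - a j|) ^ 2 ≤ (∑ j, (√(a j) - √(q j)) ^ 2) * (2 * ∑ j, (a j + q j)) := by
  -- `|q - a| = |√q - √a| (√q + √a)`, then Cauchy–Schwarz and `(√a + √q)² ≤ 2 (a + q)`
  calc (∑ j, |q j - a j|) ^ 2
      ≤ (∑ j, (√(a j) - √(q j)) ^ 2) * ∑ j, (√(a j) + √(q j)) ^ 2 := by
        refine sum_sq_le_sum_mul_sum_of_sq_le_mul univ (fun j _ => sq_nonneg _)
          (fun j _ => sq_nonneg _) fun j _ => ?_
        rw [sq_abs, ← mul_pow, show (√(a j) - √(q j)) * (√(a j) + √(q j)) = a j - q j by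
          linear_combination sq_sqrt (ha j) - sq_sqrt (hq j)]
        exact le_of_eq (by ring)
    _ ≤ (∑ j, (√(a j) - √(q j)) ^ 2) * (2 * ∑ j, (a j + q j)) := by
        refine mul_le_mul_of_nonneg_left ?_ (sum_nonneg fun j _ => sq_nonneg _)
        rw [mul_sum]
        exact sum_le_sum fun j _ => by
          nlinarith [sq_sqrt (ha j), sq_sqrt (hq j), sq_nonneg (√(a j) - √(q j))]

theorem sq_sqrt_sub_sqrt_le_mul_log {a q : ℝ} (ha : 0 ≤ a) (hq : 0 ≤ q) (hpos : 0 < a → 0 < q) :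
    (√a - √q) ^ 2 ≤ a * log (a / q) + q - a := by
  rcases ha.eq_or_lt with rfl | ha
  · simp [sq_sqrt hq]
  have hq := hpos ha
  have hx := sqrt_pos.2 ha
  have hy := sqrt_pos.2 hq
  -- with `x = √a`, `y = √q`: `log (x² / y²) = 2 log (x / y) ≥ 2 (1 - y / x)`
  have hlog : 2 * (1 - √q / √a) ≤ log (a / q) := by
    have := one_sub_inv_le_log_of_pos (div_pos hx hy)
    rw [inv_div] at this
    rw [show a / q = (√a / √q) ^ 2 by rw [div_pow, sq_sqrt ha.le, sq_sqrt hq.le], log_pow]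
    push_cast
    linarith
  have hmul : a * (√q / √a) = √a * √q := by
    nth_rewrite 1 [← mul_self_sqrt ha.le]
    field_simp
  nlinarith [mul_le_mul_of_nonneg_left hlog ha.le, sq_sqrt ha.le, sq_sqrt hq.le]

theorem hellinger_le_klDiv {a q : ι → ℝ} (ha : ∀ j, 0 ≤ a j) (hq : ∀ j, 0 ≤ q j)
    (hpos : ∀ j, 0 < a j → 0 < q j) (hsum : ∑ j, q j = ∑ j, a j) :
    ∑ j, (√(a j) - √(q j)) ^ 2 ≤ ∑ j, a j * log (a j / q j) := by
  calc ∑ j, (√(a j) - √(q j)) ^ 2 ≤ ∑ j, (a j * log (a j / q j) + q j - a j) :=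
        sum_le_sum fun j _ => sq_sqrt_sub_sqrt_le_mul_log (ha j) (hq j) (hpos j)
    _ = ∑ j, a j * log (a j / q j) := by
        rw [sum_sub_distrib, sum_add_distrib, hsum, add_sub_cancel_right]

theorem sq_sum_abs_sub_le_gStat {a q : ι → ℝ} (ha : ∀ j, 0 ≤ a j) (ha1 : ∑ j, a j = 1)
    (hq : ∀ j, 0 ≤ q j) (hq1 : ∑ j, q j = 1) (hpos : ∀ j, 0 < a j → 0 < q j) :
    (∑ j, |q j - a j|) ^ 2 ≤ 2 * (2 * ∑ j, a j * log (a j / q j)) := by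
  have hH := hellinger_le_klDiv ha hq hpos (hq1.trans ha1.symm)
  have h := sq_sum_abs_sub_le_hellinger ha hq
  rw [sum_add_distrib, ha1, hq1] at h
  linarith

end Divergences

theorem tendsto_sum_abs_sub_of_sq_le {ι : Type*} [Fintype ι] {a q : ℕ → ι → ℝ} {p : ι → ℝ}
    {Q : ℕ → ℝ} {c : ℝ} (ha : ∀ j, Tendsto (fun N => a N j) atTop (𝓝 (p j)))
    (hQ : Tendsto Q atTop (𝓝 0))
    (h : ∀ᶠ N in atTop, (∑ j, |q N j - a N j|) ^ 2 ≤ c * Q N ^ 2) :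
    Tendsto (fun N => ∑ j, |q N j - p j|) atTop (𝓝 0) := by
  have hqa : Tendsto (fun N => ∑ j, |q N j - a N j|) atTop (𝓝 0) := by
    have hbound : Tendsto (fun N => √(c * Q N ^ 2)) atTop (𝓝 0) := by
      simpa using ((hQ.pow 2).const_mul c).sqrt
    refine squeeze_zero' (Eventually.of_forall fun N => sum_nonneg fun j _ => abs_nonneg _)
      (h.mono fun N hN => ?_) hbound
    rw [← sqrt_sq (sum_nonneg fun j _ => abs_nonneg _)]
    exact sqrt_le_sqrt hN
  have hq : ∀ j, Tendsto (fun N => q N j) atTop (𝓝 (p j)) := fun j => by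
    have hj : Tendsto (fun N => q N j - a N j) atTop (𝓝 0) :=
      squeeze_zero_norm (fun N => single_le_sum (f := fun j => |q N j - a N j|)
        (fun j _ => abs_nonneg _) (mem_univ j)) hqa
    simpa using hj.add (ha j)
  simpa using tendsto_finsetSum univ fun j _ => ((hq j).sub_const (p j)).abs

theorem identDistrib_of_measure_preimage_singleton
    {Ω α : Type*} [MeasurableSpace Ω] [MeasurableSpace α] [MeasurableSingletonClass α]
    [Countable α] {μ : Measure Ω} {X Y : Ω → α} (hX : Measurable X) (hY : Measurable Y)
    (h : ∀ a, μ (X ⁻¹' {a}) = μ (Y ⁻¹' {a})) : IdentDistrib X Y μ μ := by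
  refine ⟨hX.aemeasurable, hY.aemeasurable, Measure.ext_of_singleton fun a => ?_⟩
  rw [Measure.map_apply hX (measurableSet_singleton a),
    Measure.map_apply hY (measurableSet_singleton a), h]

theorem ae_tendsto_empFreq {n : ℕ} {Ω : Type*} [MeasurableSpace Ω] (P : Measure Ω)
    (p : Fin n → ℝ) (hp0 : ∀ j, 0 ≤ p j) (ξ : ℕ → Ω → Fin n) (hξmeas : ∀ i, Measurable (ξ i))
    (hiid : iIndepFun ξ P)
    (hdist : ∀ i j, P {ω | ξ i ω = j} = ENNReal.ofReal (p j)) (j : Fin n) :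
    ∀ᵐ ω ∂P, Tendsto (fun N => empFreq (fun i => ξ i ω) N j) atTop (𝓝 (p j)) := by
  set f : Fin n → ℝ := fun x => if x = j then 1 else 0
  have hf : Measurable f := measurable_of_countable f
  have hident : ∀ i, IdentDistrib (f ∘ ξ i) (f ∘ ξ 0) P P := fun i =>
    (identDistrib_of_measure_preimage_singleton (hξmeas i) (hξmeas 0)
      fun k => (hdist i k).trans (hdist 0 k).symm).comp hf
  have hindep : Pairwise fun i k => IndepFun (f ∘ ξ i) (f ∘ ξ k) P :=
    fun i k hik => (hiid.indepFun hik).comp hf hf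
  have hj : MeasurableSet {ω | ξ 0 ω = j} := hξmeas 0 (measurableSet_singleton j)
  have hind : f ∘ ξ 0 = Set.indicator {ω | ξ 0 ω = j} 1 := by
    ext ω
    by_cases h : ξ 0 ω = j <;> simp [f, h]
  have hint : Integrable (f ∘ ξ 0) P := by
    rw [hind]
    exact (integrableOn_const (hdist 0 j ▸ ENNReal.ofReal_ne_top)).integrable_indicator hj
  have hmean : ∫ ω, (f ∘ ξ 0) ω ∂P = p j := by
    rw [hind, Pi.one_def, integral_indicator_const 1 hj, measureReal_def, hdist 0 j, smul_eq_mul,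
      mul_one, ENNReal.toReal_ofReal (hp0 j)]
  have h := strong_law_ae_real (fun i => f ∘ ξ i) hint hindep hident
  rw [hmean] at h
  exact h

theorem empFreq_nonneg {n : ℕ} (ξ : ℕ → Fin n) (N : ℕ) (j : Fin n) : 0 ≤ empFreq ξ N j :=
  div_nonneg (sum_nonneg fun i _ => by positivity) N.cast_nonneg

theorem sum_empFreq {n : ℕ} (ξ : ℕ → Fin n) {N : ℕ} (hN : N ≠ 0) : ∑ j, empFreq ξ N j = 1 := by
  simp only [empFreq, ← sum_div]
  rw [sum_comm]
  simp [hN]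

theorem stmt10_general {n : ℕ} {Ω : Type*} [MeasurableSpace Ω]
    (P : Measure Ω)
    (p : Fin n → ℝ) (hp0 : ∀ j, 0 ≤ p j)
    -- i.i.d. data with distribution `p`
    (ξ : ℕ → Ω → Fin n) (hξmeas : ∀ i, Measurable (ξ i))
    (hiid : ProbabilityTheory.iIndepFun ξ P)
    (hdist : ∀ i j, P {ω | ξ i ω = j} = ENNReal.ofReal (p j))
    -- positive thresholds tending to zero
    (Q : ℕ → ℝ) (hQ0 : Tendsto Q atTop (𝓝 0)) :
    ∀ᵐ ω ∂P,
      -- (a) Pearson's χ² test is uniformly consistent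
      (∀ q : ℕ → Fin n → ℝ, (∀ N j, 0 < q N j) → (∀ N, ∑ j, q N j = 1) →
        (∀ᶠ N in atTop, ∑ j, (q N j - empFreq (fun i => ξ i ω) N j)^2 / q N j ≤ (Q N)^2) →
        Tendsto (fun N => (∑ j, |q N j - p j|) / 2) atTop (𝓝 0)) ∧
      -- (b) the G-test is uniformly consistent
      (∀ q : ℕ → Fin n → ℝ, (∀ N j, 0 ≤ q N j) → (∀ N, ∑ j, q N j = 1) →
        (∀ N j, 0 < empFreq (fun i => ξ i ω) N j → 0 < q N j) →
        (∀ᶠ N in atTop, 2 * ∑ j, empFreq (fun i => ξ i ω) N j *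
            Real.log (empFreq (fun i => ξ i ω) N j / q N j) ≤ (Q N)^2) →
        Tendsto (fun N => (∑ j, |q N j - p j|) / 2) atTop (𝓝 0)) := by
  filter_upwards [ae_all_iff.2 (ae_tendsto_empFreq P p hp0 ξ hξmeas hiid hdist)] with ω hω
  set a := empFreq fun i => ξ i ω
  refine ⟨fun q hq hq1 hχ => ?_, fun q hq hq1 hsupp hG => ?_⟩
  · have h : ∀ᶠ N in atTop, (∑ j, |q N j - a N j|) ^ 2 ≤ 1 * Q N ^ 2 := by
      filter_upwards [hχ] with N hN
      linarith [sq_sum_abs_sub_le_chiSq (a N) (q N) (hq N) (hq1 N)]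
    simpa using (tendsto_sum_abs_sub_of_sq_le hω hQ0 h).div_const 2
  · have h : ∀ᶠ N in atTop, (∑ j, |q N j - a N j|) ^ 2 ≤ 2 * Q N ^ 2 := by
      filter_upwards [hG, eventually_ne_atTop 0] with N hN hN0
      linarith [sq_sum_abs_sub_le_gStat (empFreq_nonneg _ N) (sum_empFreq _ hN0) (hq N) (hq1 N)
        (hsupp N)]
    simpa using (tendsto_sum_abs_sub_of_sq_le hω hQ0 h).div_const 2

/-- uniform consistency of Pearson's χ² test and of the G-test on a
known finite support.  Let the data be i.i.d. from a probability mass function `p` on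
`{1,…,n}` and let `Q_N → 0` be positive thresholds.  Then almost surely:
(a) every sequence of strictly positive pmfs `q_N` with χ² statistic
`∑_j (q_N(j) − p̂_N(j))²/q_N(j) ≤ Q_N²` for all but finitely many `N` converges to `p`
in total variation; and
(b) every sequence of pmfs `q_N`, strictly positive wherever `p̂_N` is, with G statistic
`2 ∑_j p̂_N(j) log(p̂_N(j)/q_N(j)) ≤ Q_N²` for all but finitely many `N` converges to `p`
in total variation (with the convention `0·log 0 = 0`). -/
theorem stmt10 {n : ℕ} {Ω : Type*} [MeasurableSpace Ω]
    (P : Measure Ω) [IsProbabilityMeasure P]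
    (p : Fin n → ℝ) (hp0 : ∀ j, 0 ≤ p j) (hp1 : ∑ j, p j = 1)
    -- i.i.d. data with distribution `p`
    (ξ : ℕ → Ω → Fin n) (hξmeas : ∀ i, Measurable (ξ i))
    (hiid : ProbabilityTheory.iIndepFun ξ P)
    (hdist : ∀ i j, P {ω | ξ i ω = j} = ENNReal.ofReal (p j))
    -- positive thresholds tending to zero
    (Q : ℕ → ℝ) (hQpos : ∀ N, 0 < Q N) (hQ0 : Tendsto Q atTop (𝓝 0)) :
    ∀ᵐ ω ∂P,
      -- (a) Pearson's χ² test is uniformly consistent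
      (∀ q : ℕ → Fin n → ℝ, (∀ N j, 0 < q N j) → (∀ N, ∑ j, q N j = 1) →
        (∀ᶠ N in atTop, ∑ j, (q N j - empFreq (fun i => ξ i ω) N j)^2 / q N j ≤ (Q N)^2) →
        Tendsto (fun N => (∑ j, |q N j - p j|) / 2) atTop (𝓝 0)) ∧
      -- (b) the G-test is uniformly consistent
      (∀ q : ℕ → Fin n → ℝ, (∀ N j, 0 ≤ q N j) → (∀ N, ∑ j, q N j = 1) →
        (∀ N j, 0 < empFreq (fun i => ξ i ω) N j → 0 < q N j) →
        (∀ᶠ N in atTop, 2 * ∑ j, empFreq (fun i => ξ i ω) N j *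
            Real.log (empFreq (fun i => ξ i ω) N j / q N j) ≤ (Q N)^2) →
        Tendsto (fun N => (∑ j, |q N j - p j|) / 2) atTop (𝓝 0)) :=
  stmt10_general P p hp0 ξ hξmeas hiid hdist Q hQ0
end

section
/- Let F be a Borel probability measure on ℝ and ξ¹, ξ², … i.i.d. draws from F; for each N let ξ_(1) ≤ ⋯ ≤ ξ_(N) denote the first N data points sorted in nondecreasing order. For a Borel probability measure G on ℝ with cumulative distribution function G(t) = G((−∞,t]), define the Kolmogorov–Smirnov statistic D_N(G) = max_{1≤i≤N} max( i/N − G(ξ_(i)), G(ξ_(i)) − (i−1)/N ) and the Kuiper statistic V_N(G) = max_{1≤i≤N}( G(ξ_(i)) − (i−1)/N ) + max_{1≤i≤N}( i/N − G(ξ_(i)) ). Let (Q_N) be positive reals with Q_N → 0. Then almost surely: every sequence (G_N) of Borel probability measures on ℝ with D_N(G_N) ≤ Q_N for all but finitely many N converges weakly to F; the same conclusion holds with V_N in place of D_N. That is, the Kolmogorov–Smirnov and Kuiper goodness-of-fit tests are uniformly consistent. -/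
/-!
By the strong law of large numbers, almost surely the empirical distribution function `F_N` of
the first `N` data points converges to `F` at every rational point. Since the `i`-th order
statistic is `≤ t` exactly when `i ≤ N F_N(t)`, a Kolmogorov–Smirnov bound `D_N(G) ≤ q` traps
`G(t)` between `F_N(t) - q` and `F_N(t) + q` for every `t`. Hence `D_N(G_N) ≤ Q_N → 0` forces
`G_N(q) → F(q)` for rational `q`, i.e. convergence on the π-system of intervals `(a, b]` with
rational ends, which is enough for weak convergence. A Kuiper bound `V_N(G) ≤ q` implies
`D_N(G) ≤ q`, because each of the two maxima in `V_N(G)` is nonnegative (take `i = 1`,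
resp. `i = N`).
-/

open MeasureTheory Filter Topology
open scoped ENNReal

noncomputable def cdfOf (G : ProbabilityMeasure ℝ) (t : ℝ) : ℝ :=
  (G.toMeasure (Set.Iic t)).toReal

section CDF

open Set

lemma cdfOf_nonneg (G : ProbabilityMeasure ℝ) (t : ℝ) : 0 ≤ cdfOf G t := measureReal_nonneg

lemma cdfOf_le_one (G : ProbabilityMeasure ℝ) (t : ℝ) : cdfOf G t ≤ 1 := measureReal_le_one

lemma monotone_cdfOf (G : ProbabilityMeasure ℝ) : Monotone (cdfOf G) := fun _ _ h =>
  measureReal_mono (Iic_subset_Iic.2 h)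

lemma coe_apply_Ioc_eq_cdfOf_sub (G : ProbabilityMeasure ℝ) {a b : ℝ} (hab : a ≤ b) :
    (G (Ioc a b) : ℝ) = cdfOf G b - cdfOf G a := by
  rw [← ProbabilityMeasure.measureReal_eq_coe_coeFn, ← Iic_sdiff_Iic,
    measureReal_sdiff (Iic_subset_Iic.2 hab) measurableSet_Iic]
  rfl

lemma tendsto_of_tendsto_cdfOf_rat {G : ℕ → ProbabilityMeasure ℝ} {F : ProbabilityMeasure ℝ}
    (h : ∀ q : ℚ, Tendsto (fun N => cdfOf (G N) q) atTop (𝓝 (cdfOf F q))) :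
    Tendsto G atTop (𝓝 F) := by
  refine (isPiSystem_Ioc ((↑) : ℚ → ℝ) ((↑) : ℚ → ℝ)).tendsto_probabilityMeasure_of_tendsto_of_mem
    ?_ ?_ ?_
  · rintro _ ⟨a, b, -, rfl⟩
    exact measurableSet_Ioc
  · intro u hu x hx
    obtain ⟨ε, hε, hball⟩ := Metric.isOpen_iff.1 hu x hx
    obtain ⟨a, hxa, hax⟩ := exists_rat_btwn (show x - ε < x by linarith)
    obtain ⟨b, hxb, hbx⟩ := exists_rat_btwn (show x < x + ε by linarith)
    refine ⟨Ioc a b, ⟨a, b, by exact_mod_cast hax.trans hxb, rfl⟩, Ioc_mem_nhds hax hxb, ?_⟩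
    rw [Real.ball_eq_Ioo] at hball
    exact (Ioc_subset_Ioo_right hbx).trans ((Ioo_subset_Ioo_left hxa.le).trans hball)
  · rintro _ ⟨a, b, hab, rfl⟩
    rw [← NNReal.tendsto_coe]
    simp_rw [coe_apply_Ioc_eq_cdfOf_sub _ hab.le]
    exact (h b).sub (h a)

end CDF

section EmpiricalCDF

open Finset ProbabilityTheory

noncomputable def empiricalCDF {N : ℕ} (x : Fin N → ℝ) (t : ℝ) : ℝ :=
  (#{k | x k ≤ t} : ℝ) / N

lemma empiricalCDF_comp_perm {N : ℕ} (x : Fin N → ℝ) (σ : Equiv.Perm (Fin N)) :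
    empiricalCDF (x ∘ σ) = empiricalCDF x := by
  ext t
  simp only [empiricalCDF, card_filter, Function.comp_apply,
    Equiv.sum_comp σ (fun k => if x k ≤ t then 1 else 0)]

lemma Monotone.le_iff_lt_card_filter_le {α : Type*} [LinearOrder α] {N : ℕ} {s : Fin N → α}
    (hs : Monotone s) (t : α) (i : Fin N) : s i ≤ t ↔ (i : ℕ) < #{j | s j ≤ t} := by
  constructor
  · intro hi
    have hsub : Iic i ⊆ ({j | s j ≤ t} : Finset (Fin N)) := fun j hj =>
      mem_filter.2 ⟨mem_univ j, (hs (mem_Iic.1 hj)).trans hi⟩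
    simpa using card_le_card hsub
  · intro hlt
    by_contra hi
    have hsub : ({j | s j ≤ t} : Finset (Fin N)) ⊆ Iio i := fun j hj =>
      mem_Iio.2 (lt_of_not_ge fun hij => hi ((hs hij).trans (mem_filter.1 hj).2))
    simpa using (card_le_card hsub).trans_lt' hlt

lemma abs_sub_empiricalCDF_le {N : ℕ} (hN : 0 < N) {g : ℝ → ℝ} (hg : Monotone g)
    (hg0 : ∀ t, 0 ≤ g t) (hg1 : ∀ t, g t ≤ 1) {s : Fin N → ℝ} (hs : Monotone s) {q : ℝ}
    (hKS : ∀ i : Fin N, (((i : ℕ) : ℝ) + 1) / N - g (s i) ≤ q ∧ g (s i) - ((i : ℕ) : ℝ) / N ≤ q)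
    (t : ℝ) : |g t - empiricalCDF s t| ≤ q := by
  have hNR : (0 : ℝ) < N := by exact_mod_cast hN
  -- the two bounds at the smallest data point add up to `1 / N ≤ 2 q`
  have hq : 0 ≤ q := by
    have h0 := hKS ⟨0, hN⟩
    have : 0 < 1 / (N : ℝ) := by positivity
    simp only [Nat.cast_zero, zero_add, zero_div] at h0
    linarith [h0.1, h0.2]
  rw [empiricalCDF, abs_sub_le_iff]
  set m := #{j | s j ≤ t}
  have hmN : m ≤ N := (card_filter_le _ _).trans (card_fin N).le
  have hiff := hs.le_iff_lt_card_filter_le t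
  constructor
  · rcases hmN.lt_or_eq with hm | hm
    · have hlt : t < s ⟨m, hm⟩ := lt_of_not_ge fun h => ((hiff _).1 h).false
      have hbound := (hKS ⟨m, hm⟩).2
      linarith [hg hlt.le]
    · rw [hm, div_self hNR.ne']
      linarith [hg1 t]
  · rcases Nat.eq_zero_or_pos m with hm | hm
    · rw [hm, Nat.cast_zero, zero_div]
      linarith [hg0 t]
    · have hle : s ⟨m - 1, by omega⟩ ≤ t := (hiff _).2 (by simp only; omega)
      have hbound := (hKS ⟨m - 1, by omega⟩).1
      have hcast : ((m - 1 : ℕ) : ℝ) + 1 = m := by exact_mod_cast Nat.sub_add_cancel hm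
      rw [hcast] at hbound
      linarith [hg hle]

lemma ks_bound_of_kuiper_bound {N : ℕ} {a : Fin N → ℝ} (ha0 : ∀ i, 0 ≤ a i) (ha1 : ∀ i, a i ≤ 1)
    {q : ℝ} (hV : ∀ i j : Fin N, (a i - ((i : ℕ) : ℝ) / N) + ((((j : ℕ) : ℝ) + 1) / N - a j) ≤ q)
    (i : Fin N) : (((i : ℕ) : ℝ) + 1) / N - a i ≤ q ∧ a i - ((i : ℕ) : ℝ) / N ≤ q := by
  have hN : 0 < N := i.pos
  constructor
  · have h := hV ⟨0, hN⟩ i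
    simp only [Nat.cast_zero, zero_div, sub_zero] at h
    linarith [ha0 ⟨0, hN⟩]
  · have h := hV i ⟨N - 1, by omega⟩
    have hcast : ((N - 1 : ℕ) : ℝ) + 1 = N := by exact_mod_cast Nat.sub_add_cancel hN
    rw [hcast, div_self (by positivity)] at h
    linarith [ha1 ⟨N - 1, by omega⟩]

lemma tendsto_empiricalCDF_ae {Ω : Type*} [MeasurableSpace Ω] {P : Measure Ω}
    {μ : Measure ℝ} [IsProbabilityMeasure μ] {ξ : ℕ → Ω → ℝ}
    (hindep : Pairwise fun i j => IndepFun (ξ i) (ξ j) P)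
    (hdist : ∀ i, P.map (ξ i) = μ) (t : ℝ) :
    ∀ᵐ ω ∂P, Tendsto (fun N : ℕ => empiricalCDF (fun k : Fin N => ξ k ω) t) atTop
      (𝓝 (μ.real (Set.Iic t))) := by
  have hξ : ∀ i, AEMeasurable (ξ i) P := fun i =>
    AEMeasurable.of_map_ne_zero (by rw [hdist i]; exact IsProbabilityMeasure.ne_zero μ)
  set f : ℝ → ℝ := (Set.Iic t).indicator 1
  have hf : Measurable f := measurable_one.indicator measurableSet_Iic
  have hint : Integrable f μ := (integrable_const 1).indicator measurableSet_Iic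
  have hmean : ∫ ω, f (ξ 0 ω) ∂P = μ.real (Set.Iic t) := by
    rw [← integral_map (hξ 0) hf.aestronglyMeasurable, hdist 0,
      integral_indicator_one measurableSet_Iic]
  have hcount : ∀ ω N, ∑ k ∈ range N, f (ξ k ω) = #{k : Fin N | ξ k ω ≤ t} := by
    intro ω N
    rw [← Fin.sum_univ_eq_sum_range (fun k => f (ξ k ω)), card_filter]
    push_cast
    simp [f, Set.indicator]
  have hslln := strong_law_ae (fun k ω => f (ξ k ω))
    ((integrable_map_measure hf.aestronglyMeasurable (hξ 0)).1 (by rwa [hdist 0]))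
    (fun i j hij => (hindep hij).comp hf hf)
    (fun i => (IdentDistrib.mk (hξ i) (hξ 0) (by rw [hdist i, hdist 0])).comp hf)
  filter_upwards [hslln] with ω hω
  simpa only [empiricalCDF, ← hcount, hmean, smul_eq_mul, inv_mul_eq_div] using hω

end EmpiricalCDF

theorem stmt12_general {Ω : Type*} [MeasurableSpace Ω]
    (P : Measure Ω)
    (F : ProbabilityMeasure ℝ)
    -- i.i.d. data drawn from `F`
    (ξ : ℕ → Ω → ℝ)
    (hiid : ProbabilityTheory.iIndepFun ξ P)
    (hdist : ∀ i, Measure.map (ξ i) P = F.toMeasure)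
    -- the order statistics of the first `N` data points
    (sorted : (N : ℕ) → Ω → Fin N → ℝ)
    (hsortmono : ∀ N ω, Monotone (sorted N ω))
    (hsortperm : ∀ N ω, ∃ σ : Equiv.Perm (Fin N), ∀ i : Fin N,
      sorted N ω i = ξ ((σ i : Fin N) : ℕ) ω)
    -- positive thresholds tending to zero
    (Q : ℕ → ℝ) (hQ0 : Tendsto Q atTop (𝓝 0)) :
    ∀ᵐ ω ∂P,
      -- Kolmogorov–Smirnov
      (∀ G : ℕ → ProbabilityMeasure ℝ,
        (∀ᶠ N in atTop, ∀ i : Fin N,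
          (((i : ℕ) : ℝ) + 1) / N - cdfOf (G N) (sorted N ω i) ≤ Q N ∧
          cdfOf (G N) (sorted N ω i) - ((i : ℕ) : ℝ) / N ≤ Q N) →
        Tendsto G atTop (𝓝 F)) ∧
      -- Kuiper
      (∀ G : ℕ → ProbabilityMeasure ℝ,
        (∀ᶠ N in atTop, ∀ i j : Fin N,
          (cdfOf (G N) (sorted N ω i) - ((i : ℕ) : ℝ) / N) +
            ((((j : ℕ) : ℝ) + 1) / N - cdfOf (G N) (sorted N ω j)) ≤ Q N) →
        Tendsto G atTop (𝓝 F)) := by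
  have hslln : ∀ᵐ ω ∂P, ∀ q : ℚ, Tendsto (fun N : ℕ => empiricalCDF (fun k : Fin N => ξ k ω) q)
      atTop (𝓝 (cdfOf F q)) :=
    ae_all_iff.2 fun q => tendsto_empiricalCDF_ae (fun i j hij => hiid.indepFun hij) hdist q
  filter_upwards [hslln] with ω hω
  have hKS : ∀ G : ℕ → ProbabilityMeasure ℝ,
      (∀ᶠ N in atTop, ∀ i : Fin N,
        (((i : ℕ) : ℝ) + 1) / N - cdfOf (G N) (sorted N ω i) ≤ Q N ∧
        cdfOf (G N) (sorted N ω i) - ((i : ℕ) : ℝ) / N ≤ Q N) →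
      Tendsto G atTop (𝓝 F) := by
    refine fun G hG => tendsto_of_tendsto_cdfOf_rat fun q => (hω q).congr_dist ?_
    refine squeeze_zero' (Eventually.of_forall fun N => dist_nonneg) ?_ hQ0
    filter_upwards [hG, eventually_gt_atTop 0] with N hN hN0
    obtain ⟨σ, hσ⟩ := hsortperm N ω
    have hsorted : sorted N ω = (fun k : Fin N => ξ k ω) ∘ σ := funext hσ
    rw [dist_comm, Real.dist_eq, ← empiricalCDF_comp_perm _ σ, ← hsorted]
    exact abs_sub_empiricalCDF_le hN0 (monotone_cdfOf _) (cdfOf_nonneg _) (cdfOf_le_one _)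
      (hsortmono N ω) hN q
  exact ⟨hKS, fun G hG => hKS G (hG.mono fun N hN =>
    ks_bound_of_kuiper_bound (fun _ => cdfOf_nonneg _ _) (fun _ => cdfOf_le_one _ _) hN)⟩

/-- uniform consistency of the Kolmogorov–Smirnov and Kuiper tests.
Let the data `ξ⁰, ξ¹, …` be i.i.d. from `F`, and for each `N` let `sorted N ω` be the
first `N` data points rearranged in nondecreasing order. Let `Q_N → 0` be positive
thresholds.  Then almost surely: every sequence `(G_N)` of Borel probability measures
on `ℝ` whose Kolmogorov–Smirnov statistic
`D_N(G_N) = max_i max(i/N − G_N(ξ_(i)), G_N(ξ_(i)) − (i−1)/N)` satisfies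
`D_N(G_N) ≤ Q_N` for all but finitely many `N` converges weakly to `F`; and the same
conclusion holds with the Kuiper statistic
`V_N(G_N) = max_i (G_N(ξ_(i)) − (i−1)/N) + max_i (i/N − G_N(ξ_(i)))` in place of `D_N`. -/
theorem stmt12 {Ω : Type*} [MeasurableSpace Ω]
    (P : Measure Ω) [IsProbabilityMeasure P]
    (F : ProbabilityMeasure ℝ)
    -- i.i.d. data drawn from `F`
    (ξ : ℕ → Ω → ℝ) (hξmeas : ∀ i, Measurable (ξ i))
    (hiid : ProbabilityTheory.iIndepFun ξ P)
    (hdist : ∀ i, Measure.map (ξ i) P = F.toMeasure)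
    -- the order statistics of the first `N` data points
    (sorted : (N : ℕ) → Ω → Fin N → ℝ)
    (hsortmono : ∀ N ω, Monotone (sorted N ω))
    (hsortperm : ∀ N ω, ∃ σ : Equiv.Perm (Fin N), ∀ i : Fin N,
      sorted N ω i = ξ ((σ i : Fin N) : ℕ) ω)
    -- positive thresholds tending to zero
    (Q : ℕ → ℝ) (hQpos : ∀ N, 0 < Q N) (hQ0 : Tendsto Q atTop (𝓝 0)) :
    ∀ᵐ ω ∂P,
      -- Kolmogorov–Smirnov
      (∀ G : ℕ → ProbabilityMeasure ℝ,
        (∀ᶠ N in atTop, ∀ i : Fin N,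
          (((i : ℕ) : ℝ) + 1) / N - cdfOf (G N) (sorted N ω i) ≤ Q N ∧
          cdfOf (G N) (sorted N ω i) - ((i : ℕ) : ℝ) / N ≤ Q N) →
        Tendsto G atTop (𝓝 F)) ∧
      -- Kuiper
      (∀ G : ℕ → ProbabilityMeasure ℝ,
        (∀ᶠ N in atTop, ∀ i j : Fin N,
          (cdfOf (G N) (sorted N ω i) - ((i : ℕ) : ℝ) / N) +
            ((((j : ℕ) : ℝ) + 1) / N - cdfOf (G N) (sorted N ω j)) ≤ Q N) →
        Tendsto G atTop (𝓝 F)) :=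
  stmt12_general P F ξ hiid hdist sorted hsortmono hsortperm Q hQ0
end

section
/- Let N ≥ 1 and let 0 ≤ ζ₁ ≤ ζ₂ ≤ ⋯ ≤ ζ_N ≤ 1 be a nondecreasing sequence. Define the Kolmogorov–Smirnov quantity D_N = max_{1≤i≤N} max( i/N − ζ_i, ζ_i − (i−1)/N ) and the Cramér–von Mises quantity W_N² = 1/(12N²) + (1/N) Σ_{i=1}^N ( ζ_i − (2i−1)/(2N) )². Then D_N² ≤ max{ 1/√N + 3/(2N), √N · W_N² + 2/√N }. -/
/-!
Let `D` be the largest discrepancy, attained at `i` (0-based), and suppose `D = (i+1)/N - ζ_i`.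
If `D > 1/√N`, then `k = ⌊√N⌋ < N D ≤ i + 1`, and by monotonicity the residual
`(2j+1)/(2N) - ζ_j` at `j = i - m` is at least `D - (2m+1)/(2N)` for every `m < k`. Summing
squares gives `k D² - D k²/N ≤ ∑ (ζ_j - (2j+1)/(2N))² = N W_N² - 1/(12N)`, whence
`√N D² ≤ N W_N² + 2`. The case `D = ζ_i - i/N` is the mirror image under
`ζ_j ↦ 1 - ζ_{N-1-j}`, which preserves the Cramér–von Mises sum.
If `D ≤ 1/√N`, then `D² ≤ 1/N ≤ 1/√N`.
-/

open Finset

lemma sq_sub_two_mul_le_sq {D c x : ℝ} (hD : 0 ≤ D) (hc : 0 ≤ c) (h : D - c ≤ x) :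
    D ^ 2 - 2 * D * c ≤ x ^ 2 := by
  rcases le_or_gt D c with hDc | hcD
  · nlinarith
  · nlinarith [sq_nonneg (x - D + c)]

lemma sum_range_two_mul_add_one (k : ℕ) :
    ∑ m ∈ range k, (2 * (m : ℝ) + 1) = (k : ℝ) ^ 2 := by
  induction k with
  | zero => simp
  | succ k ih => rw [sum_range_succ, ih]; push_cast; ring

lemma mul_sq_sub_le_sum_sq {k : ℕ} {N D : ℝ} (hN : 0 ≤ N) (hD : 0 ≤ D) {x : Fin k → ℝ}
    (hx : ∀ m : Fin k, D - (2 * (m : ℝ) + 1) / (2 * N) ≤ x m) :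
    k * D ^ 2 - D * k ^ 2 / N ≤ ∑ m, x m ^ 2 :=
  calc k * D ^ 2 - D * k ^ 2 / N
      = ∑ m : Fin k, (D ^ 2 - 2 * D * ((2 * (m : ℝ) + 1) / (2 * N))) := by
        rw [Fin.sum_univ_eq_sum_range
            (fun m : ℕ => D ^ 2 - 2 * D * ((2 * (m : ℝ) + 1) / (2 * N))), sum_sub_distrib,
          sum_const, card_range, nsmul_eq_mul]
        simp_rw [show ∀ m : ℕ, 2 * D * ((2 * (m : ℝ) + 1) / (2 * N)) = D / N * (2 * m + 1) by
          intro m; ring]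
        rw [← mul_sum, sum_range_two_mul_add_one]
        ring
    _ ≤ ∑ m, x m ^ 2 := sum_le_sum fun m _ => sq_sub_two_mul_le_sq hD (by positivity) (hx m)

section

variable {N : ℕ}

noncomputable def cvmSum (ζ : Fin N → ℝ) : ℝ :=
  ∑ i : Fin N, (ζ i - (2 * ((i : ℕ) : ℝ) + 1) / (2 * N)) ^ 2

lemma mul_sq_sub_le_cvmSum_of_le_succ_div_sub {ζ : Fin N → ℝ} (hmono : Monotone ζ)
    {i : Fin N} {D : ℝ} (hD : 0 ≤ D) (hDi : D ≤ ((i : ℕ) + 1) / N - ζ i) {k : ℕ}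
    (hk : k ≤ (i : ℕ) + 1) :
    k * D ^ 2 - D * k ^ 2 / N ≤ cvmSum ζ := by
  let e : Fin k ↪ Fin N :=
    ⟨fun m => ⟨i - m, by omega⟩, fun m m' h => by simp only [Fin.mk.injEq] at h; omega⟩
  have he (m : Fin k) : ((e m : ℕ) : ℝ) = (i : ℕ) - (m : ℕ) := by
    show (((i - m : ℕ)) : ℝ) = _
    exact Nat.cast_sub (by omega)
  calc k * D ^ 2 - D * k ^ 2 / N
      ≤ ∑ m : Fin k, ((2 * ((e m : ℕ) : ℝ) + 1) / (2 * N) - ζ (e m)) ^ 2 := by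
        refine mul_sq_sub_le_sum_sq (by positivity) hD fun m => ?_
        have hζ : ζ (e m) ≤ ζ i := hmono (Fin.le_def.mpr (Nat.sub_le _ _))
        have : (2 * ((e m : ℕ) : ℝ) + 1) / (2 * N) - ((i : ℕ) + 1) / N
            = -((2 * (m : ℝ) + 1) / (2 * N)) := by rw [he]; ring
        linarith
    _ = ∑ j ∈ univ.map e, (ζ j - (2 * ((j : ℕ) : ℝ) + 1) / (2 * N)) ^ 2 := by
        rw [sum_map]; congr 1; ext m; ring
    _ ≤ cvmSum ζ := sum_le_univ_sum_of_nonneg fun _ => sq_nonneg _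

def reflect (ζ : Fin N → ℝ) : Fin N → ℝ := fun j => 1 - ζ j.rev

lemma Monotone.reflect {ζ : Fin N → ℝ} (hmono : Monotone ζ) : Monotone (reflect ζ) :=
  fun _ _ h => sub_le_sub_left (hmono (Fin.rev_le_rev.mpr h)) 1

lemma Fin.cast_val_rev (j : Fin N) : ((j.rev : ℕ) : ℝ) = N - 1 - (j : ℕ) := by
  rw [Fin.val_rev, Nat.cast_sub (by omega)]; push_cast; ring

lemma cvmSum_reflect (ζ : Fin N → ℝ) : cvmSum (reflect ζ) = cvmSum ζ := by
  rw [cvmSum, ← Equiv.sum_comp Fin.revPerm]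
  refine sum_congr rfl fun j _ => ?_
  have hN : (N : ℝ) ≠ 0 := by have := j.pos; positivity
  simp only [reflect, Fin.revPerm_apply, Fin.rev_rev, Fin.cast_val_rev]
  field_simp
  ring

lemma mul_sq_sub_le_cvmSum_of_le_sub_div {ζ : Fin N → ℝ} (hmono : Monotone ζ)
    {i : Fin N} {D : ℝ} (hD : 0 ≤ D) (hDi : D ≤ ζ i - (i : ℕ) / N) {k : ℕ}
    (hk : k ≤ N - (i : ℕ)) :
    k * D ^ 2 - D * k ^ 2 / N ≤ cvmSum ζ := by
  rw [← cvmSum_reflect]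
  refine mul_sq_sub_le_cvmSum_of_le_succ_div_sub hmono.reflect (i := i.rev) hD ?_
    (by rw [Fin.val_rev]; omega)
  have hN : (N : ℝ) ≠ 0 := by have := i.pos; positivity
  rw [reflect, Fin.rev_rev, Fin.cast_val_rev]
  field_simp at hDi ⊢
  linarith

noncomputable def discrepancy (ζ : Fin N → ℝ) (i : Fin N) : ℝ :=
  max ((((i : ℕ) : ℝ) + 1) / N - ζ i) (ζ i - ((i : ℕ) : ℝ) / N)

lemma discrepancy_nonneg (ζ : Fin N → ℝ) (i : Fin N) : 0 ≤ discrepancy ζ i := by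
  have hN : (0 : ℝ) < 1 / N := by have := i.pos; positivity
  have : (((i : ℕ) : ℝ) + 1) / N - ζ i + (ζ i - ((i : ℕ) : ℝ) / N) = 1 / N := by ring
  by_contra! h
  obtain ⟨hlow, hup⟩ := max_lt_iff.mp h
  linarith

lemma discrepancy_le_one {ζ : Fin N → ℝ} (h0 : ∀ i, 0 ≤ ζ i) (h1 : ∀ i, ζ i ≤ 1)
    (i : Fin N) : discrepancy ζ i ≤ 1 := by
  have hN : (0 : ℝ) < N := by have := i.pos; positivity
  have : (((i : ℕ) : ℝ) + 1) / N ≤ 1 := (div_le_one hN).mpr (by exact_mod_cast i.2)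
  have : 0 ≤ ((i : ℕ) : ℝ) / N := by positivity
  exact max_le (by linarith [h0 i]) (by linarith [h1 i])

lemma mul_sq_sub_le_cvmSum {ζ : Fin N → ℝ} (hmono : Monotone ζ) (h0 : ∀ i, 0 ≤ ζ i)
    (h1 : ∀ i, ζ i ≤ 1) {i : Fin N} {D : ℝ} (hD : 0 ≤ D)
    (hDi : D ≤ discrepancy ζ i) {k : ℕ} (hk : k ≤ N * D) :
    k * D ^ 2 - D * k ^ 2 / N ≤ cvmSum ζ := by
  have hN : (N : ℝ) ≠ 0 := by have := i.pos; positivity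
  rcases le_max_iff.mp hDi with hlow | hup
  · refine mul_sq_sub_le_cvmSum_of_le_succ_div_sub hmono hD hlow ?_
    have : (k : ℝ) ≤ (i : ℕ) + 1 :=
      calc (k : ℝ) ≤ N * D := hk
        _ ≤ N * (((i : ℕ) + 1) / N - ζ i) := by gcongr
        _ = (i : ℕ) + 1 - N * ζ i := by field_simp
        _ ≤ (i : ℕ) + 1 := sub_le_self _ (mul_nonneg (Nat.cast_nonneg _) (h0 i))
    exact_mod_cast this
  · refine mul_sq_sub_le_cvmSum_of_le_sub_div hmono hD hup ?_
    have : (k : ℝ) + (i : ℕ) ≤ N :=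
      calc (k : ℝ) + (i : ℕ) ≤ N * (ζ i - (i : ℕ) / N) + (i : ℕ) := by
            gcongr; exact hk.trans (by gcongr)
        _ = N * ζ i := by field_simp; ring
        _ ≤ N := mul_le_of_le_one_right (Nat.cast_nonneg _) (h1 i)
    have : k + (i : ℕ) ≤ N := by exact_mod_cast this
    omega

end

lemma sq_le_one_div_sqrt {N D : ℝ} (hN : 1 ≤ N) (hD0 : 0 ≤ D) (hD : D ≤ 1 / √N) :
    D ^ 2 ≤ 1 / √N :=
  calc D ^ 2 ≤ (1 / √N) ^ 2 := pow_le_pow_left₀ hD0 hD 2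
    _ = 1 / N := by rw [div_pow, one_pow, Real.sq_sqrt (by linarith)]
    _ ≤ 1 / √N :=
      one_div_le_one_div_of_le (by positivity) (Real.sqrt_le_self_iff.mpr (Or.inr hN))

lemma sq_le_of_mul_sq_sub_le {N k D S : ℝ} (hN : 0 < N) (hkN : k ^ 2 ≤ N) (hNk : √N ≤ k + 1)
    (hD0 : 0 ≤ D) (hD1 : D ≤ 1) (hS : k * D ^ 2 - D * k ^ 2 / N ≤ S) :
    D ^ 2 ≤ √N * (1 / (12 * N ^ 2) + 1 / N * S) + 2 / √N := by
  have hs : 0 < √N := Real.sqrt_pos.mpr hN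
  have hk2 : D * k ^ 2 / N ≤ 1 := by rw [div_le_one hN]; nlinarith
  have hsD : √N * D ^ 2 ≤ S + 2 := by nlinarith
  have hRHS : √N * (√N * (1 / (12 * N ^ 2) + 1 / N * S) + 2 / √N) = 1 / (12 * N) + S + 2 := by
    field_simp
    rw [Real.sq_sqrt hN.le]
    ring
  rw [← mul_le_mul_iff_of_pos_left hs, hRHS]
  have : 0 < 1 / (12 * N) := by positivity
  linarith

/-- the Kolmogorov–Smirnov quantity is controlled by the
Cramér–von Mises quantity.  For a nondecreasing sequence `0 ≤ ζ₁ ≤ ⋯ ≤ ζ_N ≤ 1`,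
letting `D_N = max_i max(i/N − ζ_i, ζ_i − (i−1)/N)` and
`W_N² = 1/(12N²) + (1/N)∑_i (ζ_i − (2i−1)/(2N))²`, one has
`D_N² ≤ max(1/√N + 3/(2N), √N·W_N² + 2/√N)`. -/
theorem stmt14 (N : ℕ) (hN : 0 < N) (ζ : Fin N → ℝ) (hmono : Monotone ζ)
    (h0 : ∀ i, 0 ≤ ζ i) (h1 : ∀ i, ζ i ≤ 1) :
    (Finset.univ.sup' ⟨⟨0, hN⟩, Finset.mem_univ _⟩ (fun i : Fin N =>
        max ((((i : ℕ) : ℝ) + 1) / N - ζ i) (ζ i - ((i : ℕ) : ℝ) / N)))^2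
      ≤ max (1 / Real.sqrt N + 3 / (2 * N))
          (Real.sqrt N *
              (1 / (12 * (N : ℝ)^2) +
                (1 / N) * ∑ i : Fin N, (ζ i - (2 * ((i : ℕ) : ℝ) + 1) / (2 * N))^2) +
            2 / Real.sqrt N) := by
  have hN0 : (0 : ℝ) < N := by exact_mod_cast hN
  change (univ.sup' _ (discrepancy ζ)) ^ 2 ≤ max _ (√N * (_ + 1 / N * cvmSum ζ) + _)
  obtain ⟨i, -, hi⟩ := exists_mem_eq_sup' ⟨⟨0, hN⟩, mem_univ _⟩ (discrepancy ζ)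
  rw [hi]
  have hD0 := discrepancy_nonneg ζ i
  rcases le_or_gt (discrepancy ζ i) (1 / √N) with hsmall | hlarge
  · refine le_max_of_le_left ((sq_le_one_div_sqrt (by exact_mod_cast hN) hD0 hsmall).trans ?_)
    exact le_add_of_nonneg_right (by positivity)
  · have hs : 0 < √N := Real.sqrt_pos.mpr hN0
    have hk : (Nat.sqrt N : ℝ) ≤ N * discrepancy ζ i :=
      calc (Nat.sqrt N : ℝ) ≤ √N * 1 := by rw [mul_one]; exact Real.nat_sqrt_le_real_sqrt
        _ ≤ √N * (√N * discrepancy ζ i) := by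
          gcongr; exact ((div_lt_iff₀' hs).mp hlarge).le
        _ = N * discrepancy ζ i := by rw [← mul_assoc, Real.mul_self_sqrt hN0.le]
    exact le_max_of_le_right (sq_le_of_mul_sq_sub_le hN0 (by exact_mod_cast Nat.sqrt_le' N)
      Real.real_sqrt_le_nat_sqrt_succ hD0 (discrepancy_le_one h0 h1 i)
      (mul_sq_sub_le_cvmSum hmono h0 h1 hD0 le_rfl hk))
end

section
/- Let F be a Borel probability measure on ℝ^d with E_F‖ξ‖₂² < ∞, and let ξ¹, ξ², … be i.i.d. draws from F. Let μ̂_N = (1/N)Σ_{i=1}^N ξ^i and Σ̂_N = (1/N)Σ_{i=1}^N (ξ^i − μ̂_N)(ξ^i − μ̂_N)ᵀ. Let γ_{1,N} ↓ 0 and γ_{2,N} ↓ 0 be positive sequences, and define 𝓕_N = { G Borel probability measure on ℝ^d with finite second moments : ‖E_G[ξ] − μ̂_N‖₂ ≤ γ_{1,N} and ‖E_G[(ξ − E_G ξ)(ξ − E_G ξ)ᵀ] − Σ̂_N‖_Frobenius ≤ γ_{2,N} }. Let c(x;ξ) = c₀(x) + Σ_{i=1}^d c_i(x) ξ_i + Σ_{i=1}^d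 Σ_{j=1}^i c_{ij}(x) ξ_i ξ_j for arbitrary functions c₀, c_i, c_{ij} : X → ℝ. Then almost surely: every sequence (G_N) of probability measures with G_N ∈ 𝓕_N for all but finitely many N satisfies E_{G_N}[c(x;ξ)] → E_F[c(x;ξ)] for every x ∈ X; i.e., the test with these moment-based confidence regions is c-consistent for F. -/
/-!
By the strong law of large numbers, applied to the coordinates `ξ_k` and to the products
`ξ_k ξ_l`, the empirical mean and covariance converge almost surely to those of `F`. Each
`G_N ∈ 𝓕_N` has its mean and covariance within `γ_{1,N}`, `γ_{2,N}` of the empirical ones,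
entrywise as well, so they converge to those of `F` too. Finally, `c(x;ξ)` is quadratic in `ξ`,
so `E_G[c(x;ξ)]` is a polynomial in the mean and covariance of `G`, hence continuous in them.
-/

open MeasureTheory Filter Topology
open scoped ENNReal

/-- The `k`-th coordinate of the mean vector of a measure on `ℝ^d`. -/
noncomputable def meanCoord {d : ℕ} (G : Measure (EuclideanSpace ℝ (Fin d)))
    (k : Fin d) : ℝ :=
  ∫ ξv, ξv k ∂G

/-- The `(k,l)` entry of the covariance matrix of a measure on `ℝ^d`. -/
noncomputable def covEntry {d : ℕ} (G : Measure (EuclideanSpace ℝ (Fin d)))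
    (k l : Fin d) : ℝ :=
  ∫ ξv, (ξv k - meanCoord G k) * (ξv l - meanCoord G l) ∂G

open ProbabilityTheory

section Moments

variable {d : ℕ} {G : Measure (EuclideanSpace ℝ (Fin d))}

lemma memLp_two_apply (hG : Integrable (fun ξv => ‖ξv‖ ^ 2) G) (k : Fin d) :
    MemLp (fun ξv : EuclideanSpace ℝ (Fin d) => ξv k) 2 G := by
  have hid : MemLp id 2 G :=
    (memLp_two_iff_integrable_sq_norm aestronglyMeasurable_id).2 hG
  exact hid.of_le (EuclideanSpace.proj k).continuous.aestronglyMeasurable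
    (ae_of_all _ fun ξv => PiLp.norm_apply_le ξv k)

lemma integral_apply_mul_apply [IsProbabilityMeasure G]
    (hG : Integrable (fun ξv => ‖ξv‖ ^ 2) G) (k l : Fin d) :
    ∫ ξv, ξv k * ξv l ∂G = covEntry G k l + meanCoord G k * meanCoord G l := by
  have hcov : covEntry G k l = cov[fun ξv => ξv k, fun ξv => ξv l; G] := rfl
  rw [hcov, covariance_eq_sub (memLp_two_apply hG k) (memLp_two_apply hG l)]
  simp only [meanCoord, Pi.mul_apply, sub_add_cancel]

lemma integral_quadratic [IsProbabilityMeasure G]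
    (hG : Integrable (fun ξv => ‖ξv‖ ^ 2) G) (a : ℝ) (b : Fin d → ℝ) (C : Fin d → Fin d → ℝ) :
    ∫ ξv, (a + ∑ i, b i * ξv i + ∑ i, ∑ j ∈ Finset.Iic i, C i j * ξv i * ξv j) ∂G
      = a + ∑ i, b i * meanCoord G i
        + ∑ i, ∑ j ∈ Finset.Iic i, C i j * (covEntry G i j + meanCoord G i * meanCoord G j) := by
  have hlin (i : Fin d) : Integrable (fun ξv : EuclideanSpace ℝ (Fin d) => b i * ξv i) G :=
    ((memLp_two_apply hG i).integrable one_le_two).const_mul (b i)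
  have hquad (i j : Fin d) :
      Integrable (fun ξv : EuclideanSpace ℝ (Fin d) => C i j * ξv i * ξv j) G := by
    simp_rw [mul_assoc]
    exact ((memLp_two_apply hG i).integrable_mul (memLp_two_apply hG j)).const_mul (C i j)
  have hlin_sum : Integrable (fun ξv : EuclideanSpace ℝ (Fin d) => ∑ i, b i * ξv i) G :=
    integrable_finsetSum _ fun i _ => hlin i
  have hquad_sum : Integrable (fun ξv : EuclideanSpace ℝ (Fin d) =>
      ∑ i, ∑ j ∈ Finset.Iic i, C i j * ξv i * ξv j) G :=
    integrable_finsetSum _ fun i _ => integrable_finsetSum _ fun j _ => hquad i j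
  have haff : Integrable (fun ξv : EuclideanSpace ℝ (Fin d) => a + ∑ i, b i * ξv i) G :=
    (integrable_const a).add hlin_sum
  rw [integral_add haff hquad_sum,
    integral_add (integrable_const a) hlin_sum, integral_const,
    integral_finsetSum _ fun i _ => hlin i,
    integral_finsetSum _ fun i _ => integrable_finsetSum _ fun j _ => hquad i j]
  simp only [probReal_univ, one_smul, integral_const_mul, meanCoord]
  congr 1
  refine Finset.sum_congr rfl fun i _ => ?_
  rw [integral_finsetSum _ fun j _ => hquad i j]
  refine Finset.sum_congr rfl fun j _ => ?_
  simp_rw [mul_assoc]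
  rw [integral_const_mul, integral_apply_mul_apply hG, meanCoord, meanCoord]

end Moments

section EmpiricalMoments

lemma sum_sub_mean_mul_sub_mean_div {N : ℕ} (hN : N ≠ 0) (a b : ℕ → ℝ) :
    (∑ i ∈ Finset.range N, (a i - (∑ i' ∈ Finset.range N, a i') / N) *
        (b i - (∑ i' ∈ Finset.range N, b i') / N)) / N
      = (∑ i ∈ Finset.range N, a i * b i) / N
        - (∑ i ∈ Finset.range N, a i) / N * ((∑ i ∈ Finset.range N, b i) / N) := by
  have hN' : (N : ℝ) ≠ 0 := Nat.cast_ne_zero.mpr hN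
  simp only [sub_mul, mul_sub, Finset.sum_sub_distrib, ← Finset.sum_mul, ← Finset.mul_sum,
    Finset.sum_const, Finset.card_range, nsmul_eq_mul]
  field_simp
  ring

lemma tendsto_sum_sub_mean_mul_sub_mean_div {a b : ℕ → ℝ} {A B C : ℝ}
    (ha : Tendsto (fun N : ℕ => (∑ i ∈ Finset.range N, a i) / N) atTop (𝓝 A))
    (hb : Tendsto (fun N : ℕ => (∑ i ∈ Finset.range N, b i) / N) atTop (𝓝 B))
    (hab : Tendsto (fun N : ℕ => (∑ i ∈ Finset.range N, a i * b i) / N) atTop (𝓝 C)) :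
    Tendsto (fun N : ℕ => (∑ i ∈ Finset.range N, (a i - (∑ i' ∈ Finset.range N, a i') / N) *
        (b i - (∑ i' ∈ Finset.range N, b i') / N)) / N) atTop (𝓝 (C - A * B)) := by
  refine (hab.sub (ha.mul hb)).congr' ?_
  filter_upwards [eventually_ne_atTop 0] with N hN
  exact (sum_sub_mean_mul_sub_mean_div hN a b).symm

variable {Ω E : Type*} [MeasurableSpace Ω] [MeasurableSpace E] {P : Measure Ω} {F : Measure E}
  {ξ : ℕ → Ω → E}

lemma ae_tendsto_sum_comp_div (hξmeas : ∀ i, Measurable (ξ i)) (hiid : iIndepFun ξ P)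
    (hdist : ∀ i, Measure.map (ξ i) P = F) {f : E → ℝ} (hf : Measurable f)
    (hfi : Integrable f F) :
    ∀ᵐ ω ∂P, Tendsto (fun N : ℕ => (∑ i ∈ Finset.range N, f (ξ i ω)) / N) atTop
      (𝓝 (∫ x, f x ∂F)) := by
  have hlaw (i : ℕ) : IdentDistrib (f ∘ ξ i) f P F :=
    IdentDistrib.comp ⟨(hξmeas i).aemeasurable, aemeasurable_id, by simp [hdist i]⟩ hf
  have hSLLN := strong_law_ae_real (fun i => f ∘ ξ i) ((hlaw 0).integrable_iff.2 hfi)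
    (fun i j hij => (hiid.indepFun hij).comp hf hf)
    (fun i => (hlaw i).trans (hlaw 0).symm)
  rw [(hlaw 0).integral_eq] at hSLLN
  exact hSLLN

end EmpiricalMoments

lemma abs_le_sqrt_sum_sq {ι : Type*} [Fintype ι] (f : ι → ℝ) (i : ι) :
    |f i| ≤ √(∑ j, f j ^ 2) :=
  Real.abs_le_sqrt <|
    Finset.single_le_sum (f := fun j => f j ^ 2) (fun j _ => sq_nonneg (f j)) (Finset.mem_univ i)

lemma abs_le_sqrt_sum_sum_sq {ι κ : Type*} [Fintype ι] [Fintype κ] (f : ι → κ → ℝ) (i : ι)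
    (j : κ) : |f i j| ≤ √(∑ i', ∑ j', f i' j' ^ 2) := by
  have h := abs_le_sqrt_sum_sq (fun p : ι × κ => f p.1 p.2) (i, j)
  rwa [Fintype.sum_prod_type] at h

lemma tendsto_of_abs_sub_le {α : Type*} {l : Filter α} {u v γ : α → ℝ} {L : ℝ}
    (hv : Tendsto v l (𝓝 L)) (hγ : Tendsto γ l (𝓝 0)) (h : ∀ᶠ a in l, |u a - v a| ≤ γ a) :
    Tendsto u l (𝓝 L) := by
  have hdiff : Tendsto (fun a => u a - v a) l (𝓝 0) := squeeze_zero_norm' h hγ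
  simpa using hdiff.add hv

section EuclideanData

variable {d : ℕ} {Ω : Type*} [MeasurableSpace Ω] {P : Measure Ω}
  {F : Measure (EuclideanSpace ℝ (Fin d))} {ξ : ℕ → Ω → EuclideanSpace ℝ (Fin d)}

lemma ae_tendsto_empirical_mean [IsFiniteMeasure F] (hF2 : Integrable (fun ξv => ‖ξv‖ ^ 2) F)
    (hξmeas : ∀ i, Measurable (ξ i)) (hiid : iIndepFun ξ P)
    (hdist : ∀ i, Measure.map (ξ i) P = F) :
    ∀ᵐ ω ∂P, ∀ k, Tendsto (fun N : ℕ => (∑ i ∈ Finset.range N, ξ i ω k) / N) atTop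
      (𝓝 (meanCoord F k)) :=
  ae_all_iff.2 fun k => ae_tendsto_sum_comp_div hξmeas hiid hdist
    (EuclideanSpace.proj k).continuous.measurable
    ((memLp_two_apply hF2 k).integrable one_le_two)

lemma ae_tendsto_empirical_covariance [IsProbabilityMeasure F]
    (hF2 : Integrable (fun ξv => ‖ξv‖ ^ 2) F)
    (hξmeas : ∀ i, Measurable (ξ i)) (hiid : iIndepFun ξ P)
    (hdist : ∀ i, Measure.map (ξ i) P = F) :
    ∀ᵐ ω ∂P, ∀ k l, Tendsto (fun N : ℕ => (∑ i ∈ Finset.range N,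
        (ξ i ω k - (∑ i' ∈ Finset.range N, ξ i' ω k) / N) *
          (ξ i ω l - (∑ i' ∈ Finset.range N, ξ i' ω l) / N)) / N) atTop
      (𝓝 (covEntry F k l)) := by
  have hproducts : ∀ᵐ ω ∂P, ∀ k l, Tendsto
      (fun N : ℕ => (∑ i ∈ Finset.range N, ξ i ω k * ξ i ω l) / N) atTop
      (𝓝 (∫ ξv, ξv k * ξv l ∂F)) :=
    ae_all_iff.2 fun k => ae_all_iff.2 fun l => ae_tendsto_sum_comp_div hξmeas hiid hdist
      ((EuclideanSpace.proj k).continuous.measurable.mul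
        (EuclideanSpace.proj l).continuous.measurable)
      ((memLp_two_apply hF2 k).integrable_mul (memLp_two_apply hF2 l))
  filter_upwards [ae_tendsto_empirical_mean hF2 hξmeas hiid hdist, hproducts]
    with ω hmean hprod k l
  have hcov : covEntry F k l = ∫ ξv, ξv k * ξv l ∂F - meanCoord F k * meanCoord F l := by
    rw [integral_apply_mul_apply hF2, add_sub_cancel_right]
  rw [hcov]
  exact tendsto_sum_sub_mean_mul_sub_mean_div (hmean k) (hmean l) (hprod k l)

end EuclideanData

theorem stmt16_general {d : ℕ} {V : Type*} {Ω : Type*} [MeasurableSpace Ω]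
    (P : Measure Ω) [IsProbabilityMeasure P]
    (F : Measure (EuclideanSpace ℝ (Fin d))) [IsProbabilityMeasure F]
    (hF2 : Integrable (fun ξv => ‖ξv‖^2) F)
    -- i.i.d. data drawn from `F`
    (ξ : ℕ → Ω → EuclideanSpace ℝ (Fin d)) (hξmeas : ∀ i, Measurable (ξ i))
    (hiid : ProbabilityTheory.iIndepFun ξ P)
    (hdist : ∀ i, Measure.map (ξ i) P = F)
    -- thresholds: positive, decreasing to zero
    (γ₁ γ₂ : ℕ → ℝ)
    (hγ₁0 : Tendsto γ₁ atTop (𝓝 0))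
    (hγ₂0 : Tendsto γ₂ atTop (𝓝 0))
    -- the quadratic cost
    (c₀ : V → ℝ) (c₁ : Fin d → V → ℝ) (c₂ : Fin d → Fin d → V → ℝ) :
    ∀ᵐ ω ∂P, ∀ G : ℕ → Measure (EuclideanSpace ℝ (Fin d)),
      (∀ᶠ N in atTop,
        IsProbabilityMeasure (G N) ∧ Integrable (fun ξv => ‖ξv‖^2) (G N) ∧
        -- mean within `γ₁ N` of the empirical mean (Euclidean norm)
        Real.sqrt (∑ k, (meanCoord (G N) k -
            (∑ i ∈ Finset.range N, ξ i ω k) / N)^2) ≤ γ₁ N ∧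
        -- covariance within `γ₂ N` of the empirical covariance (Frobenius norm)
        Real.sqrt (∑ k, ∑ l, (covEntry (G N) k l -
            (∑ i ∈ Finset.range N,
              (ξ i ω k - (∑ i' ∈ Finset.range N, ξ i' ω k) / N) *
                (ξ i ω l - (∑ i' ∈ Finset.range N, ξ i' ω l) / N)) / N)^2) ≤ γ₂ N) →
      ∀ x : V,
        Tendsto (fun N => ∫ ξv,
            (c₀ x + ∑ i, c₁ i x * ξv i +
              ∑ i, ∑ j ∈ Finset.Iic i, c₂ i j x * ξv i * ξv j) ∂(G N)) atTop
          (𝓝 (∫ ξv,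
            (c₀ x + ∑ i, c₁ i x * ξv i +
              ∑ i, ∑ j ∈ Finset.Iic i, c₂ i j x * ξv i * ξv j) ∂F)) := by
  filter_upwards [ae_tendsto_empirical_mean hF2 hξmeas hiid hdist,
    ae_tendsto_empirical_covariance hF2 hξmeas hiid hdist] with ω hmean hcov G hG x
  have hGmean (k : Fin d) : Tendsto (fun N => meanCoord (G N) k) atTop (𝓝 (meanCoord F k)) :=
    tendsto_of_abs_sub_le (hmean k) hγ₁0
      (hG.mono fun N hN => (abs_le_sqrt_sum_sq _ k).trans hN.2.2.1)
  have hGcov (k l : Fin d) :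
      Tendsto (fun N => covEntry (G N) k l) atTop (𝓝 (covEntry F k l)) :=
    tendsto_of_abs_sub_le (hcov k l) hγ₂0
      (hG.mono fun N hN => (abs_le_sqrt_sum_sum_sq _ k l).trans hN.2.2.2)
  rw [integral_quadratic hF2]
  refine Tendsto.congr' (hG.mono fun N hN => ?_)
    ((tendsto_const_nhds.add (tendsto_finsetSum _ fun i _ =>
        tendsto_const_nhds.mul (hGmean i))).add
      (tendsto_finsetSum _ fun i _ => tendsto_finsetSum _ fun j _ =>
        tendsto_const_nhds.mul ((hGcov i j).add ((hGmean i).mul (hGmean j)))))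
  have := hN.1
  exact (integral_quadratic hN.2.1 _ _ _).symm

/-- the moment-based confidence regions of
Calafiore–El Ghaoui / Delage–Ye type are c-consistent for costs that are quadratic in
`ξ`.  Let `F` have finite second moment, `μ̂_N` and `Σ̂_N` be the empirical mean and
covariance of the i.i.d. data, `γ_{1,N} ↓ 0`, `γ_{2,N} ↓ 0` be positive thresholds, and
`𝓕_N` consist of the distributions whose mean is within `γ_{1,N}` (in Euclidean norm) of
`μ̂_N` and whose covariance matrix is within `γ_{2,N}` (in Frobenius norm) of `Σ̂_N`.
Then for every cost `c(x;ξ) = c₀(x) + ∑_i c_i(x) ξ_i + ∑_i ∑_{j≤i} c_{ij}(x) ξ_i ξ_j`,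
almost surely every sequence `(G_N)` with `G_N ∈ 𝓕_N` for all but finitely many `N`
satisfies `E_{G_N}[c(x;ξ)] → E_F[c(x;ξ)]` for every decision `x`. -/
theorem stmt16 {d : ℕ} {V : Type*} {Ω : Type*} [MeasurableSpace Ω]
    (P : Measure Ω) [IsProbabilityMeasure P]
    (F : Measure (EuclideanSpace ℝ (Fin d))) [IsProbabilityMeasure F]
    (hF2 : Integrable (fun ξv => ‖ξv‖^2) F)
    -- i.i.d. data drawn from `F`
    (ξ : ℕ → Ω → EuclideanSpace ℝ (Fin d)) (hξmeas : ∀ i, Measurable (ξ i))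
    (hiid : ProbabilityTheory.iIndepFun ξ P)
    (hdist : ∀ i, Measure.map (ξ i) P = F)
    -- thresholds: positive, decreasing to zero
    (γ₁ γ₂ : ℕ → ℝ)
    (hγ₁pos : ∀ N, 0 < γ₁ N) (hγ₁anti : Antitone γ₁) (hγ₁0 : Tendsto γ₁ atTop (𝓝 0))
    (hγ₂pos : ∀ N, 0 < γ₂ N) (hγ₂anti : Antitone γ₂) (hγ₂0 : Tendsto γ₂ atTop (𝓝 0))
    -- the quadratic cost
    (c₀ : V → ℝ) (c₁ : Fin d → V → ℝ) (c₂ : Fin d → Fin d → V → ℝ) :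
    ∀ᵐ ω ∂P, ∀ G : ℕ → Measure (EuclideanSpace ℝ (Fin d)),
      (∀ᶠ N in atTop,
        IsProbabilityMeasure (G N) ∧ Integrable (fun ξv => ‖ξv‖^2) (G N) ∧
        -- mean within `γ₁ N` of the empirical mean (Euclidean norm)
        Real.sqrt (∑ k, (meanCoord (G N) k -
            (∑ i ∈ Finset.range N, ξ i ω k) / N)^2) ≤ γ₁ N ∧
        -- covariance within `γ₂ N` of the empirical covariance (Frobenius norm)
        Real.sqrt (∑ k, ∑ l, (covEntry (G N) k l -
            (∑ i ∈ Finset.range N,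
              (ξ i ω k - (∑ i' ∈ Finset.range N, ξ i' ω k) / N) *
                (ξ i ω l - (∑ i' ∈ Finset.range N, ξ i' ω l) / N)) / N)^2) ≤ γ₂ N) →
      ∀ x : V,
        Tendsto (fun N => ∫ ξv,
            (c₀ x + ∑ i, c₁ i x * ξv i +
              ∑ i, ∑ j ∈ Finset.Iic i, c₂ i j x * ξv i * ξv j) ∂(G N)) atTop
          (𝓝 (∫ ξv,
            (c₀ x + ∑ i, c₁ i x * ξv i +
              ∑ i, ∑ j ∈ Finset.Iic i, c₂ i j x * ξv i * ξv j) ∂F)) :=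
  stmt16_general P F hF2 ξ hξmeas hiid hdist γ₁ γ₂ hγ₁0 hγ₂0 c₀ c₁ c₂
end

section
/- Let n ≥ 1, let p̂ ∈ ℝⁿ with p̂_j > 0 for all j and Σ_{j=1}^n p̂_j = 1, let v ∈ ℝⁿ, and let Q > 0. Then sup{ Σ_{j=1}^n v_j p₀_j : p₀ ∈ ℝⁿ, p₀_j > 0 for all j, Σ_{j=1}^n p₀_j = 1, Σ_{j=1}^n (p₀_j − p̂_j)²/p₀_j ≤ Q² } equals the minimum of r + Q² s − Σ_{j=1}^n p̂_j t_j over r ∈ ℝ, s ≥ 0, t ∈ ℝⁿ, y ∈ ℝⁿ with y_j ≥ 0, subject to the constraints: s + r ≥ v_j, 2s + t_j ≤ y_j, and 2s − v_j + r ≥ sqrt( (r − v_j)² + y_j² ) for every j = 1,…,n; moreover this minimum is attained. -/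
open scoped BigOperators
set_option maxHeartbeats 1000000

lemma stmt18_weak {n : ℕ} (phat v : Fin n → ℝ) (Q r s : ℝ) (t yv : Fin n → ℝ)
    (hph : ∀ j, 0 < phat j)
    (hs : 0 ≤ s) (hvr : ∀ j, v j ≤ s + r)
    (hty : ∀ j, 2*s + t j ≤ yv j) (hyv : ∀ j, 0 ≤ yv j)
    (hsoc : ∀ j, Real.sqrt ((r - v j)^2 + (yv j)^2) ≤ 2*s - v j + r)
    (p₀ : Fin n → ℝ) (hp : ∀ j, 0 < p₀ j) (hp1 : ∑ j, p₀ j = 1)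
    (hpc : ∑ j, (p₀ j - phat j)^2 / p₀ j ≤ Q^2) :
    ∑ j, v j * p₀ j ≤ r + Q^2 * s - ∑ j, phat j * t j := by
  have key : ∀ j, v j * p₀ j + phat j * t j
      ≤ r * p₀ j + s * ((p₀ j - phat j)^2 / p₀ j) := by
    intro j
    have hpj := hp j
    have hphj := hph j
    have ha : 0 ≤ s + r - v j := by have := hvr j; linarith
    have hR : 0 ≤ 2*s - v j + r := le_trans (Real.sqrt_nonneg _) (hsoc j)
    have hsq : (r - v j)^2 + (yv j)^2 ≤ (2*s - v j + r)^2 := by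
      have h1 := hsoc j
      have h2 : Real.sqrt ((r - v j)^2 + (yv j)^2) ^ 2 = (r - v j)^2 + (yv j)^2 :=
        Real.sq_sqrt (by positivity)
      nlinarith [Real.sqrt_nonneg ((r - v j)^2 + (yv j)^2)]
    have hy2 : (yv j)^2 ≤ 4*s*(s + r - v j) := by nlinarith
    have hkey2 : phat j * yv j * p₀ j ≤ (s + r - v j) * (p₀ j)^2 + s * (phat j)^2 := by
      have h1 : (phat j * yv j * p₀ j)^2 ≤ ((s + r - v j) * (p₀ j)^2 + s * (phat j)^2)^2 := by
        nlinarith [mul_le_mul_of_nonneg_left hy2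
            (show (0:ℝ) ≤ (phat j)^2 * (p₀ j)^2 by positivity),
          sq_nonneg ((s + r - v j) * (p₀ j)^2 - s * (phat j)^2)]
      have hX : 0 ≤ phat j * yv j * p₀ j := by
        have := hyv j; positivity
      have hY : 0 ≤ (s + r - v j) * (p₀ j)^2 + s * (phat j)^2 := by positivity
      have := Real.sqrt_le_sqrt h1
      rwa [Real.sqrt_sq hX, Real.sqrt_sq hY] at this
    rw [← sub_nonneg,
      show r * p₀ j + s * ((p₀ j - phat j)^2 / p₀ j) - (v j * p₀ j + phat j * t j)
        = (r * (p₀ j)^2 + s * (p₀ j - phat j)^2 - (v j * p₀ j + phat j * t j) * p₀ j) / p₀ j by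
        field_simp]
    apply div_nonneg _ hpj.le
    have h3 : phat j * p₀ j * (2*s + t j) ≤ phat j * p₀ j * yv j :=
      mul_le_mul_of_nonneg_left (hty j) (by positivity)
    nlinarith [hkey2, h3]
  have h1 : ∑ j, (v j * p₀ j + phat j * t j)
      ≤ ∑ j, (r * p₀ j + s * ((p₀ j - phat j)^2 / p₀ j)) :=
    Finset.sum_le_sum fun j _ => key j
  rw [Finset.sum_add_distrib, Finset.sum_add_distrib, ← Finset.mul_sum, ← Finset.mul_sum,
    hp1, mul_one] at h1
  have h2 : s * (∑ j, (p₀ j - phat j)^2 / p₀ j) ≤ s * Q^2 :=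
    mul_le_mul_of_nonneg_left hpc hs
  linarith

/-- strong conic duality for the worst-case expectation over Pearson's
χ² confidence region on a finite support.  With `p̂ > 0` the empirical pmf, `v` the
costs at the support points, and `Q > 0` the threshold,
`sup{ ∑_j v_j p₀_j : p₀ > 0, ∑ p₀ = 1, ∑_j (p₀_j − p̂_j)²/p₀_j ≤ Q² }` equals the minimum
of `r + Q²s − ∑_j p̂_j t_j` over `r ∈ ℝ, s ≥ 0, t, y ≥ 0` subject to `v_j ≤ s + r`,
`2s + t_j ≤ y_j`, and the second-order cone constraints
`sqrt((r − v_j)² + y_j²) ≤ 2s − v_j + r`; moreover the minimum is attained. -/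
theorem stmt18 (n : ℕ) (hn : 0 < n) (phat : Fin n → ℝ) (hphatpos : ∀ j, 0 < phat j)
    (hphatsum : ∑ j, phat j = 1) (v : Fin n → ℝ) (Q : ℝ) (hQ : 0 < Q) :
    ∃ m : ℝ,
      IsLeast {y : ℝ | ∃ (r s : ℝ) (t yv : Fin n → ℝ),
          0 ≤ s ∧ (∀ j, 0 ≤ yv j) ∧
          (∀ j, v j ≤ s + r) ∧
          (∀ j, 2 * s + t j ≤ yv j) ∧
          (∀ j, Real.sqrt ((r - v j)^2 + (yv j)^2) ≤ 2 * s - v j + r) ∧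
          y = r + Q^2 * s - ∑ j, phat j * t j} m ∧
      sSup {y : ℝ | ∃ p₀ : Fin n → ℝ, (∀ j, 0 < p₀ j) ∧ (∑ j, p₀ j = 1) ∧
          (∑ j, (p₀ j - phat j)^2 / p₀ j) ≤ Q^2 ∧ y = ∑ j, v j * p₀ j} = m := by
  classical
  haveI : Nonempty (Fin n) := ⟨⟨0, hn⟩⟩
  have hQ2 : (0:ℝ) < Q^2 := by positivity
  obtain ⟨j₀, hj₀⟩ : ∃ j₀, ∀ k, v k ≤ v j₀ := Finite.exists_max v
  obtain ⟨k₀, hk₀⟩ : ∃ k₀, ∀ k, v k₀ ≤ v k := Finite.exists_min v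
  by_cases hcst : ∀ j, v j = v j₀
  · -- constant costs
    have hfeas : ∑ j, (phat j - phat j)^2 / phat j ≤ Q^2 := by
      simp; positivity
    have hval : ∑ j, v j * phat j = v j₀ := by
      calc ∑ j, v j * phat j = ∑ j, v j₀ * phat j :=
            Finset.sum_congr rfl fun j _ => by rw [hcst j]
        _ = v j₀ * ∑ j, phat j := by rw [Finset.mul_sum]
        _ = v j₀ := by rw [hphatsum, mul_one]
    refine ⟨v j₀, ⟨⟨v j₀, 0, fun _ => 0, fun _ => 0, le_refl 0, fun j => le_refl 0,
        fun j => by simp [hcst j], fun j => by norm_num,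
        fun j => by simp [hcst j], by simp⟩, ?_⟩, ?_⟩
    · rintro d ⟨r', s', t', y', hs', hy', hvr', hty', hsoc', rfl⟩
      have := stmt18_weak phat v Q r' s' t' y' hphatpos hs' hvr' hty' hy' hsoc'
        phat hphatpos hphatsum hfeas
      linarith [hval]
    · apply IsGreatest.csSup_eq
      constructor
      · exact ⟨phat, hphatpos, hphatsum, hfeas, hval.symm⟩
      · rintro x ⟨p₀, h1, h2, h3, rfl⟩
        have : ∑ j, v j * p₀ j = v j₀ := by
          calc ∑ j, v j * p₀ j = ∑ j, v j₀ * p₀ j :=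
                Finset.sum_congr rfl fun j _ => by rw [hcst j]
            _ = v j₀ * ∑ j, p₀ j := by rw [Finset.mul_sum]
            _ = v j₀ := by rw [h2, mul_one]
        exact this.le
  · -- nonconstant costs
    push_neg at hcst
    obtain ⟨j₁, hj₁⟩ := hcst
    have hlt : v k₀ < v j₀ := by
      rcases lt_or_eq_of_le (hk₀ j₀) with h | h
      · exact h
      · exact absurd (le_antisymm (hj₀ j₁) (h ▸ hk₀ j₁)) hj₁
    set D := v j₀ - v k₀ with hD
    clear_value D
    have hDpos : 0 < D := by rw [hD]; linarith
    set c : ℝ := (Q^2+1)^2 with hc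
    clear_value c
    have hc1 : 1 < c := by rw [hc]; nlinarith
    set b := v j₀ + D/(c-1) with hb
    clear_value b
    have hbgt : v j₀ < b := by
      have : 0 < D/(c-1) := div_pos hDpos (by linarith)
      linarith
    have hbck : b - v k₀ = c * (b - v j₀) := by
      have hcne : c - 1 ≠ 0 := ne_of_gt (by linarith)
      rw [hb, hD]; field_simp; ring
    set f : ℝ → ℝ := fun μ =>
      (∑ j, phat j * Real.sqrt (μ - v j)) * (∑ j, phat j / Real.sqrt (μ - v j)) with hf
    clear_value f
    have hbv : ∀ j, 0 < b - v j := fun j => by have := hj₀ j; linarith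
    have hsb0 : 0 < Real.sqrt (b - v j₀) := Real.sqrt_pos.2 (hbv j₀)
    -- upper endpoint
    have hfb : f b ≤ Q^2 + 1 := by
      rw [hf]
      have h1 : (∑ j, phat j * Real.sqrt (b - v j)) ≤ Real.sqrt (b - v k₀) := by
        calc (∑ j, phat j * Real.sqrt (b - v j))
            ≤ ∑ j, phat j * Real.sqrt (b - v k₀) :=
              Finset.sum_le_sum fun j _ => mul_le_mul_of_nonneg_left
                (Real.sqrt_le_sqrt (by have := hk₀ j; linarith)) (hphatpos j).le
          _ = Real.sqrt (b - v k₀) := by rw [← Finset.sum_mul, hphatsum, one_mul]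
      have h2 : (∑ j, phat j / Real.sqrt (b - v j)) ≤ 1 / Real.sqrt (b - v j₀) := by
        calc (∑ j, phat j / Real.sqrt (b - v j))
            ≤ ∑ j, phat j / Real.sqrt (b - v j₀) := by
              apply Finset.sum_le_sum
              intro j _
              apply div_le_div_of_nonneg_left (hphatpos j).le hsb0
              exact Real.sqrt_le_sqrt (by have := hj₀ j; linarith)
          _ = 1 / Real.sqrt (b - v j₀) := by rw [← Finset.sum_div, hphatsum]
      have h3 : Real.sqrt (b - v k₀) * (1 / Real.sqrt (b - v j₀)) = Q^2 + 1 := by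
        rw [hbck, Real.sqrt_mul (by rw [hc]; positivity) (b - v j₀),
          show Real.sqrt c = Q^2+1 by rw [hc]; exact Real.sqrt_sq (by positivity)]
        field_simp
      calc (∑ j, phat j * Real.sqrt (b - v j)) * (∑ j, phat j / Real.sqrt (b - v j))
          ≤ Real.sqrt (b - v k₀) * (1 / Real.sqrt (b - v j₀)) := by
            apply mul_le_mul h1 h2 ?_ (Real.sqrt_nonneg _)
            exact Finset.sum_nonneg fun j _ =>
              div_nonneg (hphatpos j).le (Real.sqrt_nonneg _)
        _ = Q^2 + 1 := h3
    -- lower endpoint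
    set E := phat j₀ * phat k₀ * Real.sqrt D with hE
    clear_value E
    have hEpos : 0 < E := by
      rw [hE]
      have : 0 < Real.sqrt D := Real.sqrt_pos.2 hDpos
      have := hphatpos j₀; have := hphatpos k₀
      positivity
    set δ := min ((b - v j₀)/2) ((E / (Q^2+1))^2) with hδ
    clear_value δ
    have hδpos : 0 < δ := by
      rw [hδ]
      apply lt_min
      · linarith
      · positivity
    have hδb : δ ≤ (b - v j₀)/2 := hδ ▸ min_le_left _ _
    have hδE : Real.sqrt δ ≤ E / (Q^2+1) := by
      have := Real.sqrt_le_sqrt (hδ ▸ min_le_right ((b - v j₀)/2) ((E/(Q^2+1))^2))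
      rwa [Real.sqrt_sq (by positivity)] at this
    set a := v j₀ + δ with ha
    clear_value a
    have haj₀ : a - v j₀ = δ := by rw [ha]; ring
    have hav : ∀ j, 0 < a - v j := fun j => by have := hj₀ j; rw [ha]; linarith
    have hsδ : 0 < Real.sqrt δ := Real.sqrt_pos.2 hδpos
    have hfa : Q^2 + 1 ≤ f a := by
      rw [hf]
      have h1 : phat k₀ * Real.sqrt D ≤ ∑ j, phat j * Real.sqrt (a - v j) := by
        calc phat k₀ * Real.sqrt D ≤ phat k₀ * Real.sqrt (a - v k₀) := by
              apply mul_le_mul_of_nonneg_left _ (hphatpos k₀).le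
              apply Real.sqrt_le_sqrt
              rw [hD, ha]; linarith
          _ ≤ ∑ j, phat j * Real.sqrt (a - v j) :=
              Finset.single_le_sum (f := fun j => phat j * Real.sqrt (a - v j)) (fun j _ => by
                have := (hphatpos j).le
                positivity) (Finset.mem_univ k₀)
      have h2 : phat j₀ / Real.sqrt δ ≤ ∑ j, phat j / Real.sqrt (a - v j) := by
        have : phat j₀ / Real.sqrt δ = phat j₀ / Real.sqrt (a - v j₀) := by rw [haj₀]
        rw [this]
        exact Finset.single_le_sum (f := fun j => phat j / Real.sqrt (a - v j)) (fun j _ => by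
          have := (hphatpos j).le
          have := Real.sqrt_nonneg (a - v j)
          positivity) (Finset.mem_univ j₀)
      have h3 : Q^2 + 1 ≤ (phat k₀ * Real.sqrt D) * (phat j₀ / Real.sqrt δ) := by
        have hprod : (phat k₀ * Real.sqrt D) * (phat j₀ / Real.sqrt δ) = E / Real.sqrt δ := by
          rw [hE]; field_simp
        rw [hprod, le_div_iff₀ hsδ]
        calc (Q^2+1) * Real.sqrt δ ≤ (Q^2+1) * (E/(Q^2+1)) :=
              mul_le_mul_of_nonneg_left hδE (by positivity)
          _ = E := by field_simp
      calc Q^2 + 1 ≤ (phat k₀ * Real.sqrt D) * (phat j₀ / Real.sqrt δ) := h3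
        _ ≤ (∑ j, phat j * Real.sqrt (a - v j)) * (∑ j, phat j / Real.sqrt (a - v j)) := by
            apply mul_le_mul h1 h2 ?_ ?_
            · have := (hphatpos j₀).le; positivity
            · exact Finset.sum_nonneg fun j _ =>
                mul_nonneg (hphatpos j).le (Real.sqrt_nonneg _)
    have hab : a ≤ b := by rw [ha]; linarith
    have hcont : ContinuousOn f (Set.Icc a b) := by
      rw [hf]
      apply ContinuousOn.mul
      · apply continuousOn_finset_sum
        intro j _
        exact (continuous_const.mul
          (Real.continuous_sqrt.comp (continuous_id.sub continuous_const))).continuousOn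
      · apply continuousOn_finset_sum
        intro j _
        apply ContinuousOn.div continuousOn_const
        · exact (Real.continuous_sqrt.comp (continuous_id.sub continuous_const)).continuousOn
        · intro x hx
          have hx1 : a ≤ x := hx.1
          have : 0 < x - v j := by have := hav j; linarith
          exact ne_of_gt (Real.sqrt_pos.2 this)
    obtain ⟨μ, hμI, hμeq⟩ := intermediate_value_Icc' hab hcont ⟨hfb, hfa⟩
    rw [hf] at hμeq
    have hμmax : v j₀ < μ := by
      have h := hμI.1
      rw [ha] at h
      linarith
    have hμv : ∀ j, 0 < μ - v j := fun j => by have := hj₀ j; linarith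
    have hsX : ∀ j, 0 < Real.sqrt (μ - v j) := fun j => Real.sqrt_pos.2 (hμv j)
    set Pμ := ∑ j, phat j / Real.sqrt (μ - v j) with hPμ
    set Rμ := ∑ j, phat j * Real.sqrt (μ - v j) with hRμ
    have hP : 0 < Pμ := by
      rw [hPμ]
      exact Finset.sum_pos (fun j _ => div_pos (hphatpos j) (hsX j)) Finset.univ_nonempty
    have hPR : Rμ * Pμ = Q^2 + 1 := hμeq
    clear_value Pμ Rμ
    set σ := 1/Pμ with hσdef
    clear_value σ
    have hσ : 0 < σ := by rw [hσdef]; positivity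
    set s := σ^2 with hsdef
    clear_value s
    have hspos : 0 < s := by rw [hsdef]; positivity
    set r := μ - s with hrdef
    clear_value r
    have hRval : Rμ = (Q^2+1) * σ := by
      rw [hσdef]
      field_simp
      linarith [hPR]  -- RVAL
    set p : Fin n → ℝ := fun j => phat j * σ / Real.sqrt (μ - v j) with hpdef
    clear_value p
    have hppos : ∀ j, 0 < p j := fun j => by
      rw [hpdef]
      have := hphatpos j; have := hsX j; positivity
    have hp1 : ∑ j, p j = 1 := by
      have hterm : ∀ j ∈ Finset.univ, p j = σ * (phat j / Real.sqrt (μ - v j)) := by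
        intro j _; rw [hpdef]; ring
      rw [Finset.sum_congr rfl hterm, ← Finset.mul_sum, ← hPμ, hσdef]
      field_simp
    have hppc : ∑ j, (p j - phat j)^2 / p j = Q^2 := by
      have hterm : ∀ j ∈ Finset.univ, (p j - phat j)^2 / p j
          = p j - 2 * phat j + phat j * Real.sqrt (μ - v j) / σ := by
        intro j _
        rw [hpdef]
        have h2 := (hphatpos j).ne'
        have h3 := (hsX j).ne'
        field_simp
        ring
      rw [Finset.sum_congr rfl hterm, Finset.sum_add_distrib, Finset.sum_sub_distrib,
        hp1, ← Finset.mul_sum, hphatsum]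
      have hs2 : ∑ j, phat j * Real.sqrt (μ - v j) / σ = Rμ / σ := by
        rw [hRμ, Finset.sum_div]
      rw [hs2, hRval]
      field_simp
      ring
    set m := μ - (Q^2+1)*s with hm
    clear_value m
    have hval_primal : ∑ j, v j * p j = m := by
      have hterm : ∀ j ∈ Finset.univ, v j * p j
          = μ * p j - phat j * σ * Real.sqrt (μ - v j) := by
        intro j _
        have h4 : (μ - v j) * p j = phat j * σ * Real.sqrt (μ - v j) := by
          simp only [hpdef]
          calc (μ - v j) * (phat j * σ / Real.sqrt (μ - v j))
              = (phat j * σ) * ((μ - v j) / Real.sqrt (μ - v j)) := by ring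
            _ = (phat j * σ) * Real.sqrt (μ - v j) := by rw [Real.div_sqrt]
        linarith [h4]
      rw [Finset.sum_congr rfl hterm, Finset.sum_sub_distrib, ← Finset.mul_sum, hp1]
      have hs2 : ∑ j, phat j * σ * Real.sqrt (μ - v j) = σ * Rμ := by
        rw [hRμ, Finset.mul_sum]
        exact Finset.sum_congr rfl fun j _ => by ring
      rw [hs2, hRval, hm, hsdef]
      ring
    set yv : Fin n → ℝ := fun j => 2*σ*Real.sqrt (μ - v j) with hyvdef
    clear_value yv
    set t : Fin n → ℝ := fun j => yv j - 2*s with htdef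
    clear_value t
    have hyv0 : ∀ j, 0 ≤ yv j := fun j => by
      rw [hyvdef]
      have := (hsX j).le; positivity
    have hvr : ∀ j, v j ≤ s + r := fun j => by
      have := hμv j; rw [hrdef]; linarith
    have hty : ∀ j, 2*s + t j ≤ yv j := fun j => by rw [htdef]; simp
    have hy2 : ∀ j, (yv j)^2 = 4*s*(μ - v j) := by
      intro j
      rw [hyvdef, hsdef]
      have : (2*σ*Real.sqrt (μ - v j))^2 = 4*σ^2*(Real.sqrt (μ - v j))^2 := by ring
      rw [this, Real.sq_sqrt (hμv j).le]
    have hsoc : ∀ j, Real.sqrt ((r - v j)^2 + (yv j)^2) ≤ 2*s - v j + r := by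
      intro j
      have heq : (r - v j)^2 + (yv j)^2 = (2*s - v j + r)^2 := by
        rw [hy2 j, hrdef]; ring
      rw [heq, Real.sqrt_sq (by rw [hrdef]; linarith [hμv j, hspos.le])]
    have hdual_val : r + Q^2*s - ∑ j, phat j * t j = m := by
      have hterm : ∀ j ∈ Finset.univ, phat j * t j
          = 2*σ*(phat j * Real.sqrt (μ - v j)) - 2*s*phat j := by
        intro j _; rw [htdef, hyvdef]; ring
      rw [Finset.sum_congr rfl hterm, Finset.sum_sub_distrib, ← Finset.mul_sum,
        ← Finset.mul_sum, ← hRμ, hphatsum, mul_one, hRval, hm, hrdef, hsdef]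
      ring
    refine ⟨m, ⟨⟨r, s, t, yv, hspos.le, hyv0, hvr, fun j => hty j, fun j => hsoc j,
        hdual_val.symm⟩, ?_⟩, ?_⟩
    · rintro d ⟨r', s', t', y', hs', hy', hvr', hty', hsoc', rfl⟩
      have := stmt18_weak phat v Q r' s' t' y' hphatpos hs' hvr' hty' hy' hsoc'
        p hppos hp1 hppc.le
      linarith [hval_primal]
    · apply IsGreatest.csSup_eq
      constructor
      · exact ⟨p, hppos, hp1, hppc.le, hval_primal.symm⟩
      · rintro x ⟨p₀, h1, h2, h3, rfl⟩
        have := stmt18_weak phat v Q r s t yv hphatpos hspos.le hvr hty hyv0 hsoc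
          p₀ h1 h2 h3
        linarith [hdual_val]
end
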